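/- arXiv:1703.03598 — 4 statements merged into one kernel-verified Lean document; each statement's English description precedes it below -/
import Mathlib

section
/- Let λ ≥ 0 and let f ∈ ST_σ^λ(φ) have Taylor coefficients aₙ. If (1+2λ)²B₁ ≤ |(1+4λ)B₁² + (B₁−B₂)(1+2λ)²|, then |a₂| ≤ B₁√B₁ / √(|(1+4λ)B₁² + (B₁−B₂)(1+2λ)²|). -/
/-!
Write `z f' + λ z² f'' = φ(ω) f` with a Schwarz function `ω` and compare the second and third
derivatives at `0`: `a₂` and `a₃` are expressed through `c₁ = ω'(0)` and `c₂ = ω''(0)`. Doing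
the same for `g = f⁻¹`, whose coefficients are `-a₂` and `2a₂² - a₃`, and adding the two
third-order relations eliminates `a₃`, leaving `D (2a₂)² = B₁³ (c₂ + d₂) + B₁ (1 + 2λ)² (2a₂)²`.
The second-coefficient Schwarz bound `|ω''(0)| ≤ 2 (1 - |ω'(0)|²)` and `(1 + 2λ) 2a₂ = 2 B₁ c₁`
bound the right-hand side by `4 B₁³`.
-/

open Metric Set

noncomputable section

/-- `f` is bi-univalent on the unit disk, with `g` the univalent analytic
continuation of `f⁻¹` to the unit disk. -/
def IsBiUnivalent (f g : ℂ → ℂ) : Prop :=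
  DifferentiableOn ℂ f (ball 0 1) ∧ f 0 = 0 ∧ deriv f 0 = 1 ∧
  Set.InjOn f (ball 0 1) ∧
  DifferentiableOn ℂ g (ball 0 1) ∧ Set.InjOn g (ball 0 1) ∧
  ∀ w : ℂ, ‖w‖ < 1/4 → f (g w) = w

/-- `φ` is an analytic univalent function on the unit disk with positive real
part there, normalized by `φ 0 = 1`. -/
def IsMaMinda (φ : ℂ → ℂ) : Prop :=
  DifferentiableOn ℂ φ (ball 0 1) ∧ Set.InjOn φ (ball 0 1) ∧ φ 0 = 1 ∧
  ∀ z ∈ ball (0:ℂ) 1, 0 < (φ z).re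

/-- Membership in `ST^λ(φ)`: `f` is normalized analytic on the unit disk and
`z f'(z)/f(z) + λ z² f''(z)/f(z) ≺ φ(z)`. -/
def MemSTlam (lam : ℝ) (φ f : ℂ → ℂ) : Prop :=
  DifferentiableOn ℂ f (ball 0 1) ∧ f 0 = 0 ∧ deriv f 0 = 1 ∧
  ∃ ω : ℂ → ℂ, DifferentiableOn ℂ ω (ball 0 1) ∧ ω 0 = 0 ∧
    (∀ z ∈ ball (0:ℂ) 1, ω z ∈ ball (0:ℂ) 1) ∧
    ∀ z ∈ ball (0:ℂ) 1, z ≠ 0 →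
      z * deriv f z / f z + (lam : ℂ) * (z ^ 2 * iteratedDeriv 2 f z / f z) = φ (ω z)

open Filter Topology ComplexConjugate

section IteratedDeriv

variable {𝕜 : Type*} [NontriviallyNormedField 𝕜]

theorem iteratedDeriv_iteratedDeriv (m n : ℕ) (f : 𝕜 → 𝕜) :
    iteratedDeriv m (iteratedDeriv n f) = iteratedDeriv (m + n) f := by
  simp only [iteratedDeriv_eq_iterate, ← Function.iterate_add_apply]

theorem iteratedDeriv_succ_fun_id_mul_zero {n : ℕ} {h : 𝕜 → 𝕜}
    (hh : ContDiffAt 𝕜 (n + 1 : ℕ) h 0) :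
    iteratedDeriv (n + 1) (fun z => z * h z) 0 = (n + 1) * iteratedDeriv n h 0 := by
  rw [iteratedDeriv_fun_mul (f := fun z => z) contDiffAt_fun_id hh, Finset.sum_range_succ']
  simp [iteratedDeriv_fun_id_zero, Finset.sum_ite_eq']

theorem iteratedDeriv_two_three_of_comp_eventuallyEq_id {f g : 𝕜 → 𝕜}
    (hf : ContDiffAt 𝕜 3 f 0) (hg : ContDiffAt 𝕜 3 g 0) (hg0 : g 0 = 0)
    (hf1 : deriv f 0 = 1) (hfg : f ∘ g =ᶠ[𝓝 0] id) :
    iteratedDeriv 2 g 0 = -iteratedDeriv 2 f 0 ∧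
      iteratedDeriv 3 g 0 = 3 * iteratedDeriv 2 f 0 ^ 2 - iteratedDeriv 3 f 0 := by
  rw [← hg0] at hf
  have h1 : deriv (f ∘ g) 0 = deriv f (g 0) * deriv g 0 :=
    deriv_comp 0 (hf.differentiableAt (by norm_num)) (hg.differentiableAt (by norm_num))
  have h2 := iteratedDeriv_comp_two (hf.of_le (by norm_num)) (hg.of_le (by norm_num))
  have h3 := iteratedDeriv_comp_three hf hg
  rw [← iteratedDeriv_one, hfg.iteratedDeriv_eq] at h1
  rw [hfg.iteratedDeriv_eq] at h2 h3
  simp only [iteratedDeriv_id, one_ne_zero, OfNat.ofNat_ne_zero, OfNat.ofNat_ne_one, ↓reduceIte,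
    hg0, hf1, one_mul] at h1 h2 h3
  rw [← h1] at h2 h3
  have hg2 : iteratedDeriv 2 g 0 = -iteratedDeriv 2 f 0 := by linear_combination -h2
  exact ⟨hg2, by linear_combination -h3 - 3 * iteratedDeriv 2 f 0 * hg2⟩

end IteratedDeriv

namespace Complex

theorem norm_sub_div_one_sub_conj_mul_lt_one {a w : ℂ} (ha : ‖a‖ < 1) (hw : ‖w‖ < 1) :
    ‖(w - a) / (1 - conj a * w)‖ < 1 := by
  have hid : ‖1 - conj a * w‖ ^ 2 - ‖w - a‖ ^ 2 = (1 - ‖a‖ ^ 2) * (1 - ‖w‖ ^ 2) := by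
    simp only [Complex.sq_norm, normSq_apply, mul_re, mul_im, sub_re, sub_im, one_re, one_im,
      conj_re, conj_im]
    ring
  have hpos : 0 < (1 - ‖a‖ ^ 2) * (1 - ‖w‖ ^ 2) := by
    apply mul_pos <;> nlinarith [norm_nonneg a, norm_nonneg w]
  have hlt : ‖w - a‖ < ‖1 - conj a * w‖ :=
    lt_of_pow_lt_pow_left₀ 2 (norm_nonneg _) (by linarith)
  rw [norm_div, div_lt_one (lt_of_le_of_lt (norm_nonneg _) hlt)]
  exact hlt

/-- The Schwarz–Pick lemma at the origin. -/
theorem norm_deriv_le_one_sub_sq_of_mapsTo_ball {h : ℂ → ℂ}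
    (hd : DifferentiableOn ℂ h (ball 0 1)) (hm : MapsTo h (ball 0 1) (ball 0 1)) :
    ‖deriv h 0‖ ≤ 1 - ‖h 0‖ ^ 2 := by
  set a := h 0 with ha_def
  have ha : ‖a‖ < 1 := mem_ball_zero_iff.mp (hm (mem_ball_self one_pos))
  have hden : ∀ w : ℂ, ‖w‖ < 1 → 1 - conj a * w ≠ 0 := by
    intro w hw h
    have : ‖conj a * w‖ < 1 := by
      rw [norm_mul, norm_conj]; nlinarith [norm_nonneg a, norm_nonneg w]
    rw [← sub_eq_zero.mp h, norm_one] at this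
    exact lt_irrefl _ this
  have hnorm : 1 - conj a * a = ((1 - ‖a‖ ^ 2 : ℝ) : ℂ) := by
    rw [mul_comm, mul_conj, normSq_eq_norm_sq]; push_cast; ring
  have hpos : 0 < 1 - ‖a‖ ^ 2 := by nlinarith [norm_nonneg a]
  -- Composing with the disc automorphism sending `a` to `0` reduces to the Schwarz lemma.
  set χ := fun z => (h z - a) / (1 - conj a * h z)
  have hχd : DifferentiableOn ℂ χ (ball 0 1) :=
    (hd.sub_const a).div ((differentiableOn_const 1).sub (hd.const_mul _))
      fun z hz => hden _ (mem_ball_zero_iff.mp (hm hz))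
  have hχm : MapsTo χ (ball 0 1) (closedBall (χ 0) 1) := fun z hz => by
    simpa [χ, ← ha_def] using
      (norm_sub_div_one_sub_conj_mul_lt_one ha (mem_ball_zero_iff.mp (hm hz))).le
  have hχ' : deriv χ 0 = deriv h 0 / (1 - conj a * a) := by
    have h0 : HasDerivAt h (deriv h 0) 0 :=
      (hd.differentiableAt (ball_mem_nhds 0 one_pos)).hasDerivAt
    have := (h0.sub_const a).fun_div ((h0.const_mul (conj a)).const_sub 1) (hden a ha)
    rw [this.deriv, ← ha_def]
    field_simp [hden a ha]
    ring
  have hS := norm_deriv_le_one_of_mapsTo_ball hχd hχm one_pos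
  rwa [hχ', hnorm, norm_div, norm_real, Real.norm_of_nonneg hpos.le, div_le_one hpos] at hS

theorem norm_deriv_le_one_sub_sq_of_mapsTo_closedBall {h : ℂ → ℂ}
    (hd : DifferentiableOn ℂ h (ball 0 1)) (hm : MapsTo h (ball 0 1) (closedBall 0 1)) :
    ‖deriv h 0‖ ≤ 1 - ‖h 0‖ ^ 2 := by
  by_cases hsphere : ∃ z ∈ ball (0 : ℂ) 1, ‖h z‖ = 1
  · obtain ⟨z₀, hz₀, hnorm⟩ := hsphere
    have hmax : IsMaxOn (norm ∘ h) (ball 0 1) z₀ := fun z hz => by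
      simpa [hnorm] using hm hz
    have hconst := eqOn_of_isPreconnected_of_isMaxOn_norm
      (convex_ball (0 : ℂ) 1).isPreconnected isOpen_ball hd hz₀ hmax
    have hderiv : deriv h 0 = 0 := by
      rw [(eventuallyEq_of_mem (ball_mem_nhds 0 one_pos) hconst).deriv_eq]
      exact deriv_const 0 (h z₀)
    rw [hderiv, hconst (mem_ball_self one_pos)]
    simp [hnorm]
  · push Not at hsphere
    refine norm_deriv_le_one_sub_sq_of_mapsTo_ball hd fun z hz => ?_
    exact mem_ball_zero_iff.mpr <|
      (mem_closedBall_zero_iff.mp (hm hz)).lt_of_ne (hsphere z hz)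

theorem norm_iteratedDeriv_two_le_of_mapsTo_ball {ω : ℂ → ℂ}
    (hd : DifferentiableOn ℂ ω (ball 0 1)) (h0 : ω 0 = 0)
    (hm : MapsTo ω (ball 0 1) (ball 0 1)) :
    ‖iteratedDeriv 2 ω 0‖ ≤ 2 * (1 - ‖deriv ω 0‖ ^ 2) := by
  set ψ := dslope ω 0
  have hψd : DifferentiableOn ℂ ψ (ball 0 1) :=
    (differentiableOn_dslope (ball_mem_nhds 0 one_pos)).mpr hd
  have hψm : MapsTo ψ (ball 0 1) (closedBall 0 1) := fun z hz => by
    simpa using norm_dslope_le_div_of_mapsTo_ball hd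
      (by rw [h0]; exact hm.mono_right ball_subset_closedBall) hz
  have hω : ω = fun z => z * ψ z := by
    funext z
    simpa [h0] using (sub_smul_dslope ω 0 z).symm
  have h2 : iteratedDeriv 2 ω 0 = 2 * deriv ψ 0 := by
    rw [hω, iteratedDeriv_succ_fun_id_mul_zero
      (hψd.analyticAt (ball_mem_nhds 0 one_pos)).contDiffAt, iteratedDeriv_one]
    norm_num
  rw [h2, ← dslope_same ω 0, norm_mul, Complex.norm_two]
  exact mul_le_mul_of_nonneg_left
    (norm_deriv_le_one_sub_sq_of_mapsTo_closedBall hψd hψm) zero_le_two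

end Complex

/-- `z f' + λ z² f''`, i.e. `f` times the function that `ST^λ(φ)` subordinates to `φ`. -/
def starlikeOp (lam : ℂ) (f : ℂ → ℂ) (z : ℂ) : ℂ :=
  z * deriv f z + lam * (z ^ 2 * iteratedDeriv 2 f z)

theorem iteratedDeriv_starlikeOp_zero {lam : ℂ} {f : ℂ → ℂ} (hf : AnalyticAt ℂ f 0) (n : ℕ) :
    iteratedDeriv (n + 2) (starlikeOp lam f) 0 =
      (n + 2) * (1 + (n + 1) * lam) * iteratedDeriv (n + 2) f 0 := by
  have hd (k : ℕ) {m : WithTop ℕ∞} : ContDiffAt ℂ m (iteratedDeriv k f) 0 :=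
    (iteratedDeriv_eq_iterate (f := f) ▸ hf.iterated_deriv k).contDiffAt
  have hs : starlikeOp lam f =
      fun z => z * iteratedDeriv 1 f z + lam * (z * (z * iteratedDeriv 2 f z)) := by
    funext z; simp only [starlikeOp, iteratedDeriv_one]; ring
  rw [hs, iteratedDeriv_fun_add, iteratedDeriv_const_mul_field,
    iteratedDeriv_succ_fun_id_mul_zero (hd 1), iteratedDeriv_succ_fun_id_mul_zero,
    iteratedDeriv_succ_fun_id_mul_zero (hd 2), iteratedDeriv_iteratedDeriv,
    iteratedDeriv_iteratedDeriv]
  · push_cast; ring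
  all_goals fun_prop

theorem iteratedDeriv_two_three_of_starlikeOp_eq {lam : ℂ} {f φ ω : ℂ → ℂ}
    (hf : AnalyticAt ℂ f 0) (hφ : AnalyticAt ℂ φ 0) (hω : AnalyticAt ℂ ω 0)
    (hf0 : f 0 = 0) (hf1 : deriv f 0 = 1) (hφ0 : φ 0 = 1) (hω0 : ω 0 = 0)
    (heq : starlikeOp lam f =ᶠ[𝓝 0] fun z => φ (ω z) * f z) :
    (1 + 2 * lam) * iteratedDeriv 2 f 0 = 2 * deriv φ 0 * deriv ω 0 ∧
    (2 + 6 * lam) * iteratedDeriv 3 f 0 = 3 * iteratedDeriv 2 φ 0 * deriv ω 0 ^ 2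
      + 3 * deriv φ 0 * iteratedDeriv 2 ω 0 + 3 * deriv φ 0 * deriv ω 0 * iteratedDeriv 2 f 0 := by
  rw [← hω0] at hφ
  have hP : AnalyticAt ℂ (fun z => φ (ω z)) 0 := hφ.comp hω
  have hP1 : deriv (fun z => φ (ω z)) 0 = deriv φ (ω 0) * deriv ω 0 :=
    deriv_comp (h₂ := φ) 0 hφ.differentiableAt hω.differentiableAt
  have hP2 : iteratedDeriv 2 (fun z => φ (ω z)) 0 =
      iteratedDeriv 2 φ (ω 0) * deriv ω 0 ^ 2 + deriv φ (ω 0) * iteratedDeriv 2 ω 0 :=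
    iteratedDeriv_comp_two hφ.contDiffAt hω.contDiffAt
  have h2 := heq.iteratedDeriv_eq 2
  have h3 := heq.iteratedDeriv_eq 3
  rw [iteratedDeriv_starlikeOp_zero hf 0, iteratedDeriv_fun_mul hP.contDiffAt hf.contDiffAt] at h2
  rw [iteratedDeriv_starlikeOp_zero hf 1, iteratedDeriv_fun_mul hP.contDiffAt hf.contDiffAt] at h3
  simp only [Finset.sum_range_succ, Finset.range_one, Finset.sum_singleton, Nat.choose_zero_right,
    Nat.choose_one_right, Nat.choose_succ_self_right, Nat.choose_self, Nat.reduceAdd,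
    Nat.reduceSub, Nat.add_one_sub_one, tsub_zero, tsub_self, Nat.cast_one, Nat.cast_ofNat,
    CharP.cast_eq_zero, iteratedDeriv_zero, iteratedDeriv_one, hP1, hP2, hf0, hf1, hφ0, hω0,
    zero_add, add_zero, one_mul, mul_one, mul_zero] at h2 h3
  constructor
  · linear_combination h2
  · linear_combination h3

theorem MemSTlam.exists_coeff_relations {lam : ℝ} {φ f : ℂ → ℂ} (hφ : IsMaMinda φ)
    (hf : MemSTlam lam φ f) :
    ∃ c₁ c₂ : ℂ, ‖c₂‖ ≤ 2 * (1 - ‖c₁‖ ^ 2) ∧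
      (1 + 2 * (lam : ℂ)) * iteratedDeriv 2 f 0 = 2 * deriv φ 0 * c₁ ∧
      (2 + 6 * (lam : ℂ)) * iteratedDeriv 3 f 0 = 3 * iteratedDeriv 2 φ 0 * c₁ ^ 2
        + 3 * deriv φ 0 * c₂ + 3 * deriv φ 0 * c₁ * iteratedDeriv 2 f 0 := by
  obtain ⟨hφd, -, hφ0, hφre⟩ := hφ
  obtain ⟨hfd, hf0, hf1, ω, hωd, hω0, hωm, hsub⟩ := hf
  have hball : ball (0 : ℂ) 1 ∈ 𝓝 0 := ball_mem_nhds 0 one_pos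
  have heq : ∀ z ∈ ball (0 : ℂ) 1, starlikeOp lam f z = φ (ω z) * f z := by
    intro z hz
    rcases eq_or_ne z 0 with rfl | hz0
    · simp [starlikeOp, hf0]
    -- If `f z = 0`, the quotients in the subordination vanish (`x / 0 = 0`), against `Re φ > 0`.
    have hfz : f z ≠ 0 := fun hfz => by
      have hre := hφre _ (hωm z hz)
      rw [← hsub z hz hz0, hfz] at hre
      simp at hre
    rw [starlikeOp, ← hsub z hz hz0]
    field_simp
  exact ⟨deriv ω 0, iteratedDeriv 2 ω 0,
    Complex.norm_iteratedDeriv_two_le_of_mapsTo_ball hωd hω0 hωm,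
    iteratedDeriv_two_three_of_starlikeOp_eq (hfd.analyticAt hball) (hφd.analyticAt hball)
      (hωd.analyticAt hball) hf0 hf1 hφ0 hω0 (eventually_of_mem hball heq)⟩

theorem norm_mul_sq_le_of_coeff_relations {lam B₂ A₂ A₃ c₁ c₂ d₁ d₂ : ℂ} {B₁ : ℝ}
    (hB₁ : 0 < B₁) (hc : ‖c₂‖ ≤ 2 * (1 - ‖c₁‖ ^ 2)) (hd : ‖d₂‖ ≤ 2 * (1 - ‖d₁‖ ^ 2))
    (hf2 : (1 + 2 * lam) * A₂ = 2 * B₁ * c₁)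
    (hf3 : (2 + 6 * lam) * A₃ = 3 * (2 * B₂) * c₁ ^ 2 + 3 * B₁ * c₂ + 3 * B₁ * c₁ * A₂)
    (hg2 : (1 + 2 * lam) * -A₂ = 2 * B₁ * d₁)
    (hg3 : (2 + 6 * lam) * (3 * A₂ ^ 2 - A₃) =
      3 * (2 * B₂) * d₁ ^ 2 + 3 * B₁ * d₂ + 3 * B₁ * d₁ * -A₂) :
    ‖(1 + 4 * lam) * B₁ ^ 2 + (B₁ - B₂) * (1 + 2 * lam) ^ 2‖ * ‖A₂‖ ^ 2 ≤ 4 * B₁ ^ 3 := by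
  have hB : (B₁ : ℂ) ≠ 0 := Complex.ofReal_ne_zero.mpr hB₁.ne'
  have hd₁ : d₁ = -c₁ := mul_left_cancel₀ (mul_ne_zero two_ne_zero hB) <| by
    linear_combination -hg2 - hf2
  subst hd₁
  have key : ((1 + 4 * lam) * B₁ ^ 2 + (B₁ - B₂) * (1 + 2 * lam) ^ 2) * A₂ ^ 2 =
      B₁ ^ 3 * (c₂ + d₂) + B₁ * ((1 + 2 * lam) * A₂) ^ 2 := by
    linear_combination (B₁ ^ 2 / 3 : ℂ) * hf3 + (B₁ ^ 2 / 3 : ℂ) * hg3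
      + (-B₁ ^ 2 * A₂ - B₂ * ((1 + 2 * lam) * A₂ + 2 * B₁ * c₁)) * hf2
  have hnorm : ‖(1 + 2 * lam) * A₂‖ = 2 * B₁ * ‖c₁‖ := by
    rw [hf2, norm_mul, norm_mul, Complex.norm_two, Complex.norm_real,
      Real.norm_of_nonneg hB₁.le]
  rw [norm_neg] at hd
  calc _ = ‖B₁ ^ 3 * (c₂ + d₂) + B₁ * ((1 + 2 * lam) * A₂) ^ 2‖ := by
        rw [← key, norm_mul, norm_pow]
    _ ≤ B₁ ^ 3 * (‖c₂‖ + ‖d₂‖) + B₁ * (2 * B₁ * ‖c₁‖) ^ 2 := by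
        refine (norm_add_le _ _).trans (add_le_add ?_ (le_of_eq ?_))
        · rw [norm_mul, norm_pow, Complex.norm_real, Real.norm_of_nonneg hB₁.le]
          exact mul_le_mul_of_nonneg_left (norm_add_le _ _) (by positivity)
        · rw [norm_mul, norm_pow, hnorm, Complex.norm_real, Real.norm_of_nonneg hB₁.le]
    _ ≤ 4 * B₁ ^ 3 := by nlinarith [pow_pos hB₁ 3]

theorem stmt_0_general
    (lam : ℝ) (hlam : 0 ≤ lam) (φ f g : ℂ → ℂ)
    (B₁ : ℝ) (B₂ : ℂ) (hB₁ : 0 < B₁)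
    (hφ : IsMaMinda φ)
    (hφ1 : deriv φ 0 = (B₁:ℂ))
    (hφ2 : iteratedDeriv 2 φ 0 = 2 * B₂)
    (hbi : IsBiUnivalent f g)
    (hf : MemSTlam lam φ f) (hg : MemSTlam lam φ g)
    (a : ℕ → ℂ) (ha : ∀ n, a n = iteratedDeriv n f 0 / (n.factorial : ℂ))
    (D : ℂ) (hD : D = (1 + 4*(lam:ℂ)) * (B₁:ℂ)^2 + ((B₁:ℂ) - B₂) * (1 + 2*(lam:ℂ))^2)
    (hcond : (1 + 2*lam)^2 * B₁ ≤ ‖D‖) :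
    ‖a 2‖ ≤ B₁ * Real.sqrt B₁ / Real.sqrt ‖D‖ := by
  have hball : ball (0 : ℂ) 1 ∈ 𝓝 0 := ball_mem_nhds 0 one_pos
  obtain ⟨hfd, -, hf1, -, hgd, -, hfg⟩ := hbi
  obtain ⟨c₁, c₂, hc, hf2, hf3⟩ := hf.exists_coeff_relations hφ
  obtain ⟨d₁, d₂, hd, hg2, hg3⟩ := hg.exists_coeff_relations hφ
  have hg0 : g 0 = 0 := hg.2.1
  obtain ⟨hG2, hG3⟩ := iteratedDeriv_two_three_of_comp_eventuallyEq_id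
    (hfd.analyticAt hball).contDiffAt (hgd.analyticAt hball).contDiffAt hg0 hf1
    (eventually_of_mem (ball_mem_nhds 0 (by norm_num : (0 : ℝ) < 1 / 4))
      fun w hw => hfg w (mem_ball_zero_iff.mp hw))
  rw [hφ1] at hf2 hg2
  rw [hφ1, hφ2] at hf3 hg3
  rw [hG2] at hg2 hg3
  rw [hG3] at hg3
  have hbound := norm_mul_sq_le_of_coeff_relations hB₁ hc hd hf2 hf3 hg2 hg3
  rw [← hD] at hbound
  have hDpos : 0 < ‖D‖ := (mul_pos (pow_pos (by linarith) 2) hB₁).trans_le hcond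
  have ha2 : ‖a 2‖ = ‖iteratedDeriv 2 f 0‖ / 2 := by
    rw [ha, norm_div]; norm_num [Nat.factorial]
  rw [le_div_iff₀ (Real.sqrt_pos.mpr hDpos), ← pow_le_pow_iff_left₀ (by positivity)
    (by positivity) two_ne_zero, mul_pow, mul_pow, Real.sq_sqrt hDpos.le,
    Real.sq_sqrt hB₁.le, ha2]
  nlinarith

theorem stmt_0
    (lam : ℝ) (hlam : 0 ≤ lam) (φ f g : ℂ → ℂ)
    (B₁ : ℝ) (B₂ B₃ : ℂ) (hB₁ : 0 < B₁)
    (hφ : IsMaMinda φ)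
    (hφ1 : deriv φ 0 = (B₁:ℂ))
    (hφ2 : iteratedDeriv 2 φ 0 = 2 * B₂)
    (hφ3 : iteratedDeriv 3 φ 0 = 6 * B₃)
    (hbi : IsBiUnivalent f g)
    (hf : MemSTlam lam φ f) (hg : MemSTlam lam φ g)
    (a : ℕ → ℂ) (ha : ∀ n, a n = iteratedDeriv n f 0 / (n.factorial : ℂ))
    (D : ℂ) (hD : D = (1 + 4*(lam:ℂ)) * (B₁:ℂ)^2 + ((B₁:ℂ) - B₂) * (1 + 2*(lam:ℂ))^2)
    (hcond : (1 + 2*lam)^2 * B₁ ≤ ‖D‖) :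
    ‖a 2‖ ≤ B₁ * Real.sqrt B₁ / Real.sqrt ‖D‖ :=
  stmt_0_general lam hlam φ f g B₁ B₂ hB₁ hφ hφ1 hφ2 hbi hf hg a ha D hD hcond
end
end

section
/- Let λ ≥ 0 and let f ∈ ST_σ^λ(φ) have Taylor coefficients aₙ. If (1+2λ)²B₁ ≥ |(1+4λ)B₁² + (B₁−B₂)(1+2λ)²|, then |a₂| ≤ B₁/(1+2λ). -/
open Metric Set

noncomputable section

open Filter Topology

/-!
Clearing denominators, the subordination reads `z f' + λ z² f'' = (φ ∘ ω) · f` near `0` for a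
Schwarz function `ω`. Comparing second derivatives at `0` by the Leibniz rule, and using
`f 0 = 0`, `f' 0 = 1`, `φ 0 = 1`, gives `(1 + 2λ) f''(0) = 2 φ'(0) ω'(0)`; the Schwarz lemma
`|ω'(0)| ≤ 1` and `a₂ = f''(0) / 2` finish the proof.
-/

section
variable {𝕜 : Type*} [NontriviallyNormedField 𝕜]

theorem iteratedDeriv_two_mul {f g : 𝕜 → 𝕜} {x : 𝕜} (hf : ContDiffAt 𝕜 2 f x)
    (hg : ContDiffAt 𝕜 2 g x) :
    iteratedDeriv 2 (fun z => f z * g z) x =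
      iteratedDeriv 2 f x * g x + 2 * deriv f x * deriv g x + f x * iteratedDeriv 2 g x := by
  rw [iteratedDeriv_fun_mul hf hg]
  simp only [Finset.sum_range_succ, Finset.sum_range_zero, iteratedDeriv_zero, iteratedDeriv_one]
  norm_num
  ring

theorem AnalyticAt.iteratedDeriv [CompleteSpace 𝕜] {f : 𝕜 → 𝕜} {x : 𝕜}
    (hf : AnalyticAt 𝕜 f x) (n : ℕ) : AnalyticAt 𝕜 (iteratedDeriv n f) x := by
  rw [iteratedDeriv_eq_iterate]
  exact hf.iterated_deriv n

theorem iteratedDeriv_two_mul_deriv_add_zero [CompleteSpace 𝕜] {f : 𝕜 → 𝕜}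
    (hf : AnalyticAt 𝕜 f 0) (c : 𝕜) :
    iteratedDeriv 2 (fun z => z * deriv f z + c * (z ^ 2 * iteratedDeriv 2 f z)) 0 =
      2 * (1 + c) * iteratedDeriv 2 f 0 := by
  have h1 : ContDiffAt 𝕜 2 (deriv f) 0 := hf.deriv.contDiffAt
  have h2 : ContDiffAt 𝕜 2 (iteratedDeriv 2 f) 0 := (hf.iteratedDeriv 2).contDiffAt
  have hid : ContDiffAt 𝕜 2 (fun z : 𝕜 => z) 0 := contDiffAt_id
  have hsq : ContDiffAt 𝕜 2 (fun z : 𝕜 => z ^ 2) 0 := by fun_prop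
  have hid₂ : iteratedDeriv 2 (fun z : 𝕜 => z) 0 = 0 := by simp [iteratedDeriv_fun_id_zero]
  have hsq₁ : deriv (fun z : 𝕜 => z ^ 2) 0 = 0 := by simp
  have hsq₂ : iteratedDeriv 2 (fun z : 𝕜 => z ^ 2) 0 = 2 := by simp
  rw [iteratedDeriv_fun_add (hid.mul h1) (contDiffAt_const.mul (hsq.mul h2)),
    iteratedDeriv_const_mul_field, iteratedDeriv_two_mul hid h1, iteratedDeriv_two_mul hsq h2,
    hid₂, hsq₁, hsq₂, deriv_id'', ← iteratedDeriv_one, ← iteratedDeriv_succ]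
  ring

end

theorem add_mul_eq_mul_of_div_add_mul_div_eq {K : Type*} [Field K] {p q c y w : K}
    (hw : w ≠ 0) (h : p / y + c * (q / y) = w) : p + c * q = w * y := by
  -- `p / 0 = 0`, so the equation itself rules out `y = 0`.
  have hy : y ≠ 0 := by
    rintro rfl
    simp only [div_zero, mul_zero, add_zero] at h
    exact hw h.symm
  field_simp at h
  linear_combination h

namespace MemSTlam

variable {lam : ℝ} {φ f : ℂ → ℂ}

theorem exists_iteratedDeriv_two_eq_mul_deriv (hφ : IsMaMinda φ) (hf : MemSTlam lam φ f) :
    ∃ ω : ℂ → ℂ, DifferentiableOn ℂ ω (ball 0 1) ∧ MapsTo ω (ball 0 1) (ball 0 1) ∧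
      ω 0 = 0 ∧ (1 + 2 * (lam : ℂ)) * iteratedDeriv 2 f 0 = 2 * deriv φ 0 * deriv ω 0 := by
  obtain ⟨hfd, hf0, hf1, ω, hωd, hω0, hωmaps, hsub⟩ := hf
  obtain ⟨hφd, -, hφ0, hφre⟩ := hφ
  have hball : ball (0 : ℂ) 1 ∈ 𝓝 0 := isOpen_ball.mem_nhds (mem_ball_self one_pos)
  have hfa : AnalyticAt ℂ f 0 := hfd.analyticAt hball
  have hωa : AnalyticAt ℂ ω 0 := hωd.analyticAt hball
  have hφa : AnalyticAt ℂ φ (ω 0) := by rw [hω0]; exact hφd.analyticAt hball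
  have hmul : (fun z => z * deriv f z + lam * (z ^ 2 * iteratedDeriv 2 f z)) =ᶠ[𝓝 0]
      fun z => φ (ω z) * f z := by
    filter_upwards [hball] with z hz
    rcases eq_or_ne z 0 with rfl | hz0
    · simp [hf0]
    · have hφne : φ (ω z) ≠ 0 := fun h => by simpa [h] using hφre _ (hωmaps z hz)
      exact add_mul_eq_mul_of_div_add_mul_div_eq hφne
        (by simpa only [mul_div_assoc] using hsub z hz hz0)
  have hchain : deriv (fun z => φ (ω z)) 0 = deriv φ (ω 0) * deriv ω 0 :=
    (hφa.differentiableAt.hasDerivAt.comp 0 hωa.differentiableAt.hasDerivAt).deriv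
  have h2 := hmul.iteratedDeriv_eq 2
  rw [iteratedDeriv_two_mul_deriv_add_zero hfa,
    iteratedDeriv_two_mul (hφa.fun_comp hωa).contDiffAt hfa.contDiffAt,
    hchain, hf0, hf1, hω0, hφ0] at h2
  exact ⟨ω, hωd, hωmaps, hω0, by linear_combination h2⟩

theorem norm_mul_iteratedDeriv_two_le (hφ : IsMaMinda φ) (hf : MemSTlam lam φ f) :
    ‖(1 + 2 * (lam : ℂ)) * iteratedDeriv 2 f 0‖ ≤ 2 * ‖deriv φ 0‖ := by
  obtain ⟨ω, hωd, hωmaps, hω0, hcoeff⟩ := hf.exists_iteratedDeriv_two_eq_mul_deriv hφ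
  have hschwarz : ‖deriv ω 0‖ ≤ 1 := Complex.norm_deriv_le_one_of_mapsTo_ball hωd
    (by rw [hω0]; exact hωmaps.mono_right ball_subset_closedBall) one_pos
  rw [hcoeff, norm_mul, norm_mul, Complex.norm_two]
  exact mul_le_of_le_one_right (by positivity) hschwarz

end MemSTlam

theorem stmt_3_general
    (lam : ℝ) (hlam : 0 ≤ lam) (φ f : ℂ → ℂ)
    (B₁ : ℝ) (hB₁ : 0 < B₁)
    (hφ : IsMaMinda φ)
    (hφ1 : deriv φ 0 = (B₁:ℂ))
    (hf : MemSTlam lam φ f)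
    (a : ℕ → ℂ) (ha : ∀ n, a n = iteratedDeriv n f 0 / (n.factorial : ℂ)) :
    ‖a 2‖ ≤ B₁ / (1 + 2*lam) := by
  have hpos : 0 < 1 + 2 * lam := by linarith
  have hnorm : ‖1 + 2 * (lam : ℂ)‖ = 1 + 2 * lam := by
    exact_mod_cast Complex.norm_of_nonneg hpos.le
  have hcoeff := hf.norm_mul_iteratedDeriv_two_le hφ
  rw [norm_mul, hnorm, hφ1, Complex.norm_real, Real.norm_of_nonneg hB₁.le] at hcoeff
  rw [ha 2, le_div_iff₀ hpos, norm_div, Nat.factorial_two, Nat.cast_two, Complex.norm_two]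
  linarith

theorem stmt_3
    (lam : ℝ) (hlam : 0 ≤ lam) (φ f g : ℂ → ℂ)
    (B₁ : ℝ) (B₂ B₃ : ℂ) (hB₁ : 0 < B₁)
    (hφ : IsMaMinda φ)
    (hφ1 : deriv φ 0 = (B₁:ℂ))
    (hφ2 : iteratedDeriv 2 φ 0 = 2 * B₂)
    (hφ3 : iteratedDeriv 3 φ 0 = 6 * B₃)
    (hbi : IsBiUnivalent f g)
    (hf : MemSTlam lam φ f) (hg : MemSTlam lam φ g)
    (a : ℕ → ℂ) (ha : ∀ n, a n = iteratedDeriv n f 0 / (n.factorial : ℂ))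
    (D : ℂ) (hD : D = (1 + 4*(lam:ℂ)) * (B₁:ℂ)^2 + ((B₁:ℂ) - B₂) * (1 + 2*(lam:ℂ))^2)
    (hcond : ‖D‖ ≤ (1 + 2*lam)^2 * B₁) :
    ‖a 2‖ ≤ B₁ / (1 + 2*lam) :=
  stmt_3_general lam hlam φ f B₁ hB₁ hφ hφ1 hf a ha
end
end

section
/- Let λ ≥ 0 and let f ∈ ST_σ^λ(φ) have Taylor coefficients aₙ. Set D = (1+4λ)B₁² + (B₁−B₂)(1+2λ)². If (1+2λ)²B₁ ≥ |D| and D ≠ 0, then |a₃| ≤ min{ (B₁/(4(1+3λ)|D|))·( |(3+10λ)B₁²+(B₁−B₂)(1+2λ)²| + |(1+2λ)B₁²−(1+2λ)²(B₁−B₂)| ), (1/(2(1+3λ)(1+2λ)))·( |B₁²−(1+2λ)(B₁−B₂)| + (1+2λ)B₁ ) }. -/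
open Metric Set

noncomputable section

namespace STkit

open Filter Topology


variable {p q : ℂ → ℂ} {x : ℂ}

lemma anDeriv (hp : AnalyticAt ℂ p x) : AnalyticAt ℂ (deriv p) x := by
  obtain ⟨s, hs, h⟩ := hp.eventually_analyticAt.exists_mem
  have hAn : AnalyticOnNhd ℂ p (interior s) := fun y hy => h y (interior_subset hy)
  exact hAn.deriv x (mem_interior_iff_mem_nhds.2 hs)

lemma derivMulEV (hp : AnalyticAt ℂ p 0) (hq : AnalyticAt ℂ q 0) :
    deriv (fun z => p z * q z) =ᶠ[𝓝 (0:ℂ)] fun z => deriv p z * q z + p z * deriv q z := by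
  filter_upwards [hp.eventually_analyticAt, hq.eventually_analyticAt] with z hpz hqz
  exact deriv_mul hpz.differentiableAt hqz.differentiableAt

lemma derivAddEV (hp : AnalyticAt ℂ p 0) (hq : AnalyticAt ℂ q 0) :
    deriv (fun z => p z + q z) =ᶠ[𝓝 (0:ℂ)] fun z => deriv p z + deriv q z := by
  filter_upwards [hp.eventually_analyticAt, hq.eventually_analyticAt] with z hpz hqz
  exact deriv_add hpz.differentiableAt hqz.differentiableAt

lemma d1_mul (hp : AnalyticAt ℂ p 0) (hq : AnalyticAt ℂ q 0) :
    deriv (fun z => p z * q z) 0 = deriv p 0 * q 0 + p 0 * deriv q 0 :=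
  deriv_mul hp.differentiableAt hq.differentiableAt

lemma d2_mul (hp : AnalyticAt ℂ p 0) (hq : AnalyticAt ℂ q 0) :
    deriv (deriv (fun z => p z * q z)) 0 =
      deriv (deriv p) 0 * q 0 + 2 * deriv p 0 * deriv q 0 + p 0 * deriv (deriv q) 0 := by
  rw [(derivMulEV hp hq).deriv_eq]
  rw [deriv_fun_add (f := fun z => deriv p z * q z) (g := fun z => p z * deriv q z) ((anDeriv hp).mul hq).differentiableAt (hp.mul (anDeriv hq)).differentiableAt,
    d1_mul (anDeriv hp) hq, d1_mul hp (anDeriv hq)]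
  ring

lemma d2_add (hp : AnalyticAt ℂ p 0) (hq : AnalyticAt ℂ q 0) :
    deriv (deriv (fun z => p z + q z)) 0 = deriv (deriv p) 0 + deriv (deriv q) 0 := by
  rw [(derivAddEV hp hq).deriv_eq]
  exact deriv_add (anDeriv hp).differentiableAt (anDeriv hq).differentiableAt

lemma d3_add (hp : AnalyticAt ℂ p 0) (hq : AnalyticAt ℂ q 0) :
    deriv (deriv (deriv (fun z => p z + q z))) 0 =
      deriv (deriv (deriv p)) 0 + deriv (deriv (deriv q)) 0 := by
  rw [((derivAddEV hp hq).deriv).deriv_eq]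
  exact d2_add (anDeriv hp) (anDeriv hq)

lemma d3_mul (hp : AnalyticAt ℂ p 0) (hq : AnalyticAt ℂ q 0) :
    deriv (deriv (deriv (fun z => p z * q z))) 0 =
      deriv (deriv (deriv p)) 0 * q 0 + 3 * deriv (deriv p) 0 * deriv q 0 +
        3 * deriv p 0 * deriv (deriv q) 0 + p 0 * deriv (deriv (deriv q)) 0 := by
  rw [((derivMulEV hp hq).deriv).deriv_eq]
  rw [d2_add (p := fun z => deriv p z * q z) (q := fun z => p z * deriv q z) ((anDeriv hp).mul hq) (hp.mul (anDeriv hq)),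
    d2_mul (anDeriv hp) hq, d2_mul hp (anDeriv hq)]
  ring

lemma derivCompEV (hq : AnalyticAt ℂ q 0) (hp : AnalyticAt ℂ p (q 0)) :
    deriv (fun z => p (q z)) =ᶠ[𝓝 (0:ℂ)] fun z => deriv p (q z) * deriv q z := by
  have h2 : ∀ᶠ z in 𝓝 (0:ℂ), AnalyticAt ℂ p (q z) :=
    hq.continuousAt.eventually hp.eventually_analyticAt
  filter_upwards [hq.eventually_analyticAt, h2] with z hqz hpz
  exact deriv_comp z hpz.differentiableAt hqz.differentiableAt

lemma d1_comp (hq : AnalyticAt ℂ q 0) (hp : AnalyticAt ℂ p (q 0)) :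
    deriv (fun z => p (q z)) 0 = deriv p (q 0) * deriv q 0 :=
  deriv_comp 0 hp.differentiableAt hq.differentiableAt

lemma anComp (hq : AnalyticAt ℂ q 0) (hp : AnalyticAt ℂ p (q 0)) :
    AnalyticAt ℂ (fun z => p (q z)) 0 := hp.comp hq

lemma anDeriv' (hp : AnalyticAt ℂ p x) : AnalyticAt ℂ (deriv p) x := anDeriv hp

lemma d2_comp (hq : AnalyticAt ℂ q 0) (hp : AnalyticAt ℂ p (q 0)) :
    deriv (deriv (fun z => p (q z))) 0 =
      deriv (deriv p) (q 0) * (deriv q 0) ^ 2 + deriv p (q 0) * deriv (deriv q) 0 := by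
  rw [(derivCompEV hq hp).deriv_eq, d1_mul (anComp hq (anDeriv hp)) (anDeriv hq),
    d1_comp hq (anDeriv hp)]
  ring

lemma d3_comp (hq : AnalyticAt ℂ q 0) (hp : AnalyticAt ℂ p (q 0)) :
    deriv (deriv (deriv (fun z => p (q z)))) 0 =
      deriv (deriv (deriv p)) (q 0) * (deriv q 0) ^ 3 +
        3 * deriv (deriv p) (q 0) * deriv q 0 * deriv (deriv q) 0 +
        deriv p (q 0) * deriv (deriv (deriv q)) 0 := by
  rw [((derivCompEV hq hp).deriv).deriv_eq,
    d2_mul (anComp hq (anDeriv hp)) (anDeriv hq),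
    d2_comp hq (anDeriv hp), d1_comp hq (anDeriv hp)]
  ring

lemma itd2 (h : ℂ → ℂ) : iteratedDeriv 2 h = deriv (deriv h) := by
  rw [show (2:ℕ) = 1 + 1 from rfl, iteratedDeriv_succ, iteratedDeriv_one]

lemma itd3 (h : ℂ → ℂ) : iteratedDeriv 3 h = deriv (deriv (deriv h)) := by
  rw [show (3:ℕ) = 2 + 1 from rfl, iteratedDeriv_succ, itd2]



lemma mob_den_ne {a b : ℂ} (ha : Complex.normSq a < 1) (hb : Complex.normSq b < 1) :
    (1 : ℂ) - (starRingEnd ℂ) a * b ≠ 0 := by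
  intro h
  have h1 : ‖((starRingEnd ℂ) a * b)‖ < 1 := by
    rw [norm_mul, Complex.norm_conj]
    calc ‖a‖ * ‖b‖ ≤ ‖a‖ * 1 := by
          nlinarith [norm_nonneg a, norm_nonneg b, Complex.sq_norm a,
            Complex.sq_norm b, norm_nonneg b]
      _ < 1 := by nlinarith [norm_nonneg a, Complex.sq_norm a]
  have : (starRingEnd ℂ) a * b = 1 := by linear_combination -h
  rw [this] at h1
  simp at h1

lemma mob_key (a b : ℂ) :
    Complex.normSq (1 - (starRingEnd ℂ) a * b) - Complex.normSq (b - a) =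
      (1 - Complex.normSq a) * (1 - Complex.normSq b) := by
  simp only [Complex.normSq_apply, Complex.sub_re, Complex.sub_im, Complex.mul_re,
    Complex.mul_im, Complex.one_re, Complex.one_im, Complex.conj_re, Complex.conj_im]
  ring

lemma mob_lt {a b : ℂ} (ha : Complex.normSq a < 1) (hb : Complex.normSq b < 1) :
    ‖((b - a) / (1 - (starRingEnd ℂ) a * b))‖ < 1 := by
  have hden := mob_den_ne ha hb
  have hkey := mob_key a b
  have hpos : 0 < (1 - Complex.normSq a) * (1 - Complex.normSq b) := by nlinarith
  rw [norm_div, div_lt_one (norm_pos_iff.2 hden), Complex.norm_def, Complex.norm_def]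
  exact Real.sqrt_lt_sqrt (Complex.normSq_nonneg _) (by linarith)

/-- Second-coefficient Schwarz-type bound. -/
lemma schwarz_two {ω : ℂ → ℂ} (hω : DifferentiableOn ℂ ω (ball 0 1)) (h0 : ω 0 = 0)
    (hmap : MapsTo ω (ball 0 1) (ball 0 1)) :
    ‖(deriv ω 0)‖ ≤ 1 ∧
      ‖(iteratedDeriv 2 ω 0)‖ ≤ 2 * (1 - ‖(deriv ω 0)‖ ^ 2) := by
  have h0mem : (0:ℂ) ∈ ball (0:ℂ) 1 := by simp
  set u := dslope ω 0 with hu_def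
  have hmap' : MapsTo ω (ball 0 1) (ball (ω 0) 1) := by rwa [h0]
  have hu_le : ∀ z ∈ ball (0:ℂ) 1, ‖(u z)‖ ≤ 1 := by
    intro z hz
    have := Complex.norm_dslope_le_div_of_mapsTo_ball hω (hmap'.mono_right ball_subset_closedBall) hz
    simpa using this
  have hu0 : u 0 = deriv ω 0 := dslope_same ω 0
  have hu_diff : DifferentiableOn ℂ u (ball 0 1) :=
    (Complex.differentiableOn_dslope (ball_mem_nhds _ one_pos)).2 hω
  have hu_an : AnalyticAt ℂ u 0 := hu_diff.analyticAt (isOpen_ball.mem_nhds h0mem)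
  have hωz : ω = fun z => z * u z := by
    funext z
    rcases eq_or_ne z 0 with rfl | hz
    · simp [h0]
    · rw [hu_def, dslope_of_ne ω hz, slope_def_field, h0]
      field_simp
      ring
  have hw2 : iteratedDeriv 2 ω 0 = 2 * deriv u 0 := by
    rw [itd2, hωz, d2_mul (by exact analyticAt_id) hu_an]
    have hid : deriv (fun z : ℂ => z) = fun _ => (1:ℂ) := funext fun z => deriv_id z
    rw [hid]
    simp
  -- key : |u'(0)| ≤ 1 - |u 0|^2
  have key : ‖(deriv u 0)‖ ≤ 1 - ‖(u 0)‖ ^ 2 := by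
    by_cases hcase : ∀ z ∈ ball (0:ℂ) 1, ‖(u z)‖ < 1
    · -- Möbius + Schwarz
      set κ := u 0 with hκ
      have hκ1 : Complex.normSq κ < 1 := by
        have := hcase 0 h0mem
        rw [← Complex.sq_norm]
        nlinarith [norm_nonneg (u 0)]
      have hns : ∀ z ∈ ball (0:ℂ) 1, Complex.normSq (u z) < 1 := by
        intro z hz
        rw [← Complex.sq_norm]
        nlinarith [norm_nonneg (u z), hcase z hz]
      set v := fun z => (u z - κ) / (1 - (starRingEnd ℂ) κ * u z) with hv_def
      have hv_diff : DifferentiableOn ℂ v (ball 0 1) := by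
        apply DifferentiableOn.div
        · exact hu_diff.sub (differentiableOn_const _)
        · exact (differentiableOn_const _).sub ((differentiableOn_const _).mul hu_diff)
        · exact fun z hz => mob_den_ne hκ1 (hns z hz)
      have hv0 : v 0 = 0 := by simp only [hv_def]; rw [hκ, sub_self, zero_div]
      have hmapv : MapsTo v (ball 0 1) (ball (v 0) 1) := by
        intro z hz
        rw [hv0, mem_ball_zero_iff]
        exact mob_lt hκ1 (hns z hz)
      have hder := Complex.norm_deriv_le_div_of_mapsTo_ball hv_diff (hmapv.mono_right ball_subset_closedBall) one_pos
      have hden0 : (1:ℂ) - (starRingEnd ℂ) κ * u 0 = ((1 - Complex.normSq κ : ℝ) : ℂ) := by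
        rw [← hκ, ← Complex.normSq_eq_conj_mul_self]
        push_cast
        ring
      have hdenne : (1:ℂ) - (starRingEnd ℂ) κ * u 0 ≠ 0 := mob_den_ne hκ1 (hns 0 h0mem)
      have hu_diffAt : DifferentiableAt ℂ u 0 := hu_an.differentiableAt
      have hdv : deriv v 0 = deriv u 0 / (1 - (starRingEnd ℂ) κ * u 0) := by
        rw [hv_def]
        rw [deriv_fun_div (c := fun z => u z - κ) (d := fun z => 1 - (starRingEnd ℂ) κ * u z) (hu_diffAt.sub_const κ)
          ((differentiableAt_const _).sub ((differentiableAt_const _).mul hu_diffAt)) hdenne]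
        rw [deriv_sub_const, deriv_const_sub, deriv_const_mul _ hu_diffAt]
        rw [← hκ]
        have : u 0 - κ = 0 := by rw [hκ]; ring
        rw [this]
        have hdenne' : (1:ℂ) - (starRingEnd ℂ) κ * κ ≠ 0 := hdenne
        field_simp
        ring
      have habs : ‖(deriv v 0)‖ =
          ‖(deriv u 0)‖ / (1 - Complex.normSq κ) := by
        rw [hdv, norm_div, hden0, Complex.norm_real, Real.norm_eq_abs, abs_of_pos (by linarith)]
      rw [habs] at hder
      have h1 : (1:ℝ)/1 = 1 := by norm_num
      rw [h1, div_le_one (by linarith)] at hder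
      calc ‖(deriv u 0)‖ ≤ 1 - Complex.normSq κ := hder
        _ = 1 - ‖(u 0)‖ ^ 2 := by rw [← Complex.sq_norm κ, hκ]
    · -- maximum modulus: u is constant of modulus 1
      push_neg at hcase
      obtain ⟨z₀, hz₀, hge⟩ := hcase
      have hmax : IsMaxOn (norm ∘ u) (ball (0:ℂ) 1) z₀ := by
        intro y hy
        simp only [Function.comp_apply]
        exact le_trans (hu_le y hy) hge
      have heq := Complex.eqOn_of_isPreconnected_of_isMaxOn_norm
        (convex_ball (0:ℂ) 1).isPreconnected isOpen_ball hu_diff hz₀ hmax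
      have hconst : u =ᶠ[𝓝 (0:ℂ)] fun _ => u z₀ :=
        Filter.eventuallyEq_of_mem (isOpen_ball.mem_nhds h0mem) heq
      have hderiv0 : deriv u 0 = 0 := by rw [hconst.deriv_eq]; simp
      have hu0z : u 0 = u z₀ := heq h0mem
      have habs1 : ‖(u 0)‖ = 1 :=
        le_antisymm (hu_le 0 h0mem) (by rw [hu0z]; exact hge)
      rw [hderiv0, habs1]
      simp
  constructor
  · rw [← hu0]; exact hu_le 0 h0mem
  · rw [hw2, norm_mul, ← hu0]
    simpa using key
lemma monom1 : deriv (fun z : ℂ => z) = fun _ => (1:ℂ) := funext fun z => deriv_id z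

lemma monom1' : deriv (deriv (fun z : ℂ => z)) = fun _ => (0:ℂ) := by
  rw [monom1]; funext z; simp

lemma monom1'' : deriv (deriv (deriv (fun z : ℂ => z))) = fun _ => (0:ℂ) := by
  rw [monom1']; funext z; simp

lemma monom2 (c : ℂ) : deriv (fun z : ℂ => c * z ^ 2) = fun z => c * (2 * z) := by
  funext z
  rw [deriv_const_mul _ (differentiableAt_pow (n := 2)), deriv_pow_field 2]
  norm_num

lemma monom2' (c : ℂ) : deriv (deriv (fun z : ℂ => c * z ^ 2)) = fun _ => c * 2 := by
  rw [monom2]; funext z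
  rw [deriv_const_mul _ (by fun_prop : DifferentiableAt ℂ (fun z : ℂ => 2 * z) z)]
  rw [deriv_const_mul _ (by fun_prop : DifferentiableAt ℂ (fun z : ℂ => z) z)]
  simp

lemma monom2'' (c : ℂ) : deriv (deriv (deriv (fun z : ℂ => c * z ^ 2))) = fun _ => (0:ℂ) := by
  rw [monom2']; funext z; simp

/-- Coefficient relations for a function in `ST^λ(φ)`. -/
lemma ST_coeffs {lam : ℝ} {φ f : ℂ → ℂ} {B₁ : ℝ} {B₂ : ℂ}
    (hφd : DifferentiableOn ℂ φ (ball 0 1)) (hφ0 : φ 0 = 1)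
    (hφ1 : deriv φ 0 = (B₁:ℂ)) (hφ2 : iteratedDeriv 2 φ 0 = 2 * B₂)
    (hf : MemSTlam lam φ f) (hinj : Set.InjOn f (ball 0 1)) :
    ∃ c₁ c₂ : ℂ,
      ‖c₁‖ ≤ 1 ∧ ‖c₂‖ ≤ 1 - ‖c₁‖ ^ 2 ∧
      (1 + 2*(lam:ℂ)) * (iteratedDeriv 2 f 0 / 2) = (B₁:ℂ) * c₁ ∧
      2*(1 + 3*(lam:ℂ)) * (iteratedDeriv 3 f 0 / 6) =
        B₂ * c₁^2 + (B₁:ℂ) * c₂ + (B₁:ℂ) * c₁ * (iteratedDeriv 2 f 0 / 2) := by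
  obtain ⟨hfd, hf0, hf1, ω, hωd, hω0, hωmap, heq⟩ := hf
  have h0mem : (0:ℂ) ∈ ball (0:ℂ) 1 := by simp
  have hnhds : ball (0:ℂ) 1 ∈ 𝓝 (0:ℂ) := isOpen_ball.mem_nhds h0mem
  have hmap : MapsTo ω (ball 0 1) (ball 0 1) := fun z hz => hωmap z hz
  have hfa : AnalyticAt ℂ f 0 := hfd.analyticAt hnhds
  have hωa : AnalyticAt ℂ ω 0 := hωd.analyticAt hnhds
  have hφa : AnalyticAt ℂ φ (ω 0) := by rw [hω0]; exact hφd.analyticAt hnhds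
  have hP_an : AnalyticAt ℂ (fun z => φ (ω z)) 0 := hφa.comp hωa
  have hid_an : AnalyticAt ℂ (fun z : ℂ => z) 0 := by exact analyticAt_id
  have hsq_an : AnalyticAt ℂ (fun z : ℂ => (lam:ℂ) * z ^ 2) 0 := by
    exact analyticAt_const.mul (analyticAt_id.pow 2)
  have hEqOn : EqOn (fun z => z * deriv f z + ((lam:ℂ) * z^2) * deriv (deriv f) z)
      (fun z => φ (ω z) * f z) (ball 0 1) := by
    intro z hz
    rcases eq_or_ne z 0 with rfl | hzne
    · simp [hf0]
    · have hfz : f z ≠ 0 := by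
        intro h
        exact hzne (hinj hz h0mem (by rw [h, hf0]))
      have h1 := heq z hz hzne
      rw [itd2 f] at h1
      field_simp at h1
      show z * deriv f z + ((lam:ℂ) * z^2) * deriv (deriv f) z = φ (ω z) * f z
      linear_combination h1
  have hEV := Filter.eventuallyEq_of_mem hnhds hEqOn
  have E2 := hEV.iteratedDeriv_eq 2
  have E3 := hEV.iteratedDeriv_eq 3
  have hA_an : AnalyticAt ℂ (fun z : ℂ => z * deriv f z) 0 := hid_an.mul (anDeriv hfa)
  have hB_an : AnalyticAt ℂ (fun z : ℂ => ((lam:ℂ) * z^2) * deriv (deriv f) z) 0 :=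
    hsq_an.mul (anDeriv (anDeriv hfa))
  have hφ2' : deriv (deriv φ) 0 = 2 * B₂ := by rw [← hφ2, itd2]
  rw [itd2, itd2, d2_add hA_an hB_an, d2_mul hid_an (anDeriv hfa),
    d2_mul hsq_an (anDeriv (anDeriv hfa)), d2_mul hP_an hfa, d2_comp hωa hφa,
    d1_comp hωa hφa, monom1', monom1, monom2', monom2,
    hω0, hφ0, hφ1, hφ2', hf0, hf1] at E2
  rw [itd3, itd3, d3_add hA_an hB_an, d3_mul hid_an (anDeriv hfa),
    d3_mul hsq_an (anDeriv (anDeriv hfa)), d3_mul hP_an hfa, d3_comp hωa hφa,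
    d2_comp hωa hφa, d1_comp hωa hφa, monom1'', monom1', monom1,
    monom2'', monom2', monom2, hω0, hφ0, hφ1, hφ2', hf0, hf1] at E3
  simp only at E2 E3
  obtain ⟨hs1, hs2⟩ := schwarz_two hωd hω0 hmap
  refine ⟨deriv ω 0, iteratedDeriv 2 ω 0 / 2, hs1, ?_, ?_, ?_⟩
  · rw [norm_div, show ‖(2:ℂ)‖ = 2 by simp]
    linarith
  · rw [itd2 f]
    linear_combination E2 / 2
  · rw [itd2 f, itd3 f, itd2 ω]
    linear_combination E3 / 6

/-- Coefficient relations between `f` and its inverse `g`. -/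
lemma inv_coeffs {f g : ℂ → ℂ}
    (hfd : DifferentiableOn ℂ f (ball 0 1)) (hf0 : f 0 = 0) (hf1 : deriv f 0 = 1)
    (hgd : DifferentiableOn ℂ g (ball 0 1)) (hg0 : g 0 = 0) (hg1 : deriv g 0 = 1)
    (hfg : ∀ w : ℂ, ‖w‖ < 1/4 → f (g w) = w) :
    iteratedDeriv 2 g 0 = - iteratedDeriv 2 f 0 ∧
    iteratedDeriv 3 g 0 = 3 * (iteratedDeriv 2 f 0)^2 - iteratedDeriv 3 f 0 := by
  have h0mem : (0:ℂ) ∈ ball (0:ℂ) 1 := by simp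
  have hnhds : ball (0:ℂ) 1 ∈ 𝓝 (0:ℂ) := isOpen_ball.mem_nhds h0mem
  have hga : AnalyticAt ℂ g 0 := hgd.analyticAt hnhds
  have hfa : AnalyticAt ℂ f (g 0) := by rw [hg0]; exact hfd.analyticAt hnhds
  have hEV : (fun w => f (g w)) =ᶠ[𝓝 (0:ℂ)] fun w => w := by
    refine Filter.eventuallyEq_of_mem
      (Metric.ball_mem_nhds (0:ℂ) (by norm_num : (0:ℝ) < 1/4)) fun w hw => ?_
    exact hfg w (mem_ball_zero_iff.1 hw)
  have E2 := hEV.iteratedDeriv_eq 2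
  have E3 := hEV.iteratedDeriv_eq 3
  rw [itd2, d2_comp hga hfa, itd2, monom1'] at E2
  rw [itd3, d3_comp hga hfa, itd3, monom1''] at E3
  rw [hg0, hf1] at E2 E3
  simp only [hg1] at E2 E3
  rw [itd2, itd2, itd3, itd3]
  constructor
  · linear_combination E2
  · linear_combination E3 - 3 * deriv (deriv f) 0 * E2

end STkit

set_option maxHeartbeats 2000000 in
open STkit in
theorem stmt_4
    (lam : ℝ) (hlam : 0 ≤ lam) (φ f g : ℂ → ℂ)
    (B₁ : ℝ) (B₂ B₃ : ℂ) (hB₁ : 0 < B₁)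
    (hφ : IsMaMinda φ)
    (hφ1 : deriv φ 0 = (B₁:ℂ))
    (hφ2 : iteratedDeriv 2 φ 0 = 2 * B₂)
    (hφ3 : iteratedDeriv 3 φ 0 = 6 * B₃)
    (hbi : IsBiUnivalent f g)
    (hf : MemSTlam lam φ f) (hg : MemSTlam lam φ g)
    (a : ℕ → ℂ) (ha : ∀ n, a n = iteratedDeriv n f 0 / (n.factorial : ℂ))
    (D : ℂ) (hD : D = (1 + 4*(lam:ℂ)) * (B₁:ℂ)^2 + ((B₁:ℂ) - B₂) * (1 + 2*(lam:ℂ))^2)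
    (hcond : ‖D‖ ≤ (1 + 2*lam)^2 * B₁) (hDne : D ≠ 0) :
    ‖(a 3)‖ ≤ min
      (B₁ / (4*(1+3*lam) * ‖D‖) *
        (‖((3+10*(lam:ℂ))*(B₁:ℂ)^2 + ((B₁:ℂ)-B₂)*(1+2*(lam:ℂ))^2)‖ + ‖((1+2*(lam:ℂ))*(B₁:ℂ)^2 - (1+2*(lam:ℂ))^2*((B₁:ℂ)-B₂))‖))
      (1/(2*(1+3*lam)*(1+2*lam)) *
        (‖((B₁:ℂ)^2 - (1+2*(lam:ℂ))*((B₁:ℂ)-B₂))‖ + (1+2*lam)*B₁)) := by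
  obtain ⟨hφd, hφinj, hφ0, hφre⟩ := hφ
  obtain ⟨hfd, hf0, hf1, hfinj, hgd, hginj, hfg⟩ := hbi
  have hg0 : g 0 = 0 := hg.2.1
  have hg1 : deriv g 0 = 1 := hg.2.2.1
  obtain ⟨c₁, c₂, hc1, hc2, hfe1, hfe2⟩ := STkit.ST_coeffs hφd hφ0 hφ1 hφ2 hf hfinj
  obtain ⟨d₁, d₂, hd1, hd2, hge1, hge2⟩ := STkit.ST_coeffs hφd hφ0 hφ1 hφ2 hg hginj
  obtain ⟨hi2, hi3⟩ := STkit.inv_coeffs hfd hf0 hf1 hgd hg0 hg1 hfg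
  have hB1ne : (B₁:ℂ) ≠ 0 := Complex.ofReal_ne_zero.2 hB₁.ne'
  rw [hi2] at hge1
  rw [hi2, hi3] at hge2
  have hd1c1 : d₁ = -c₁ := by
    apply mul_left_cancel₀ hB1ne
    linear_combination -hge1 - hfe1
  subst hd1c1
  -- complex identities
  have k1 : 4*(1+3*(lam:ℂ))*(iteratedDeriv 3 f 0/6 - (iteratedDeriv 2 f 0/2)^2)
      = (B₁:ℂ)*(c₂ - d₂) := by linear_combination hfe2 - hge2
  have k2 : 2*D*(iteratedDeriv 2 f 0/2)^2 = (B₁:ℂ)^3*(c₂+d₂) + 2*(B₁:ℂ)^3*c₁^2 := by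
    linear_combination (B₁:ℂ)^2*hfe2 + (B₁:ℂ)^2*hge2 + ((iteratedDeriv 2 f 0)^2/2)*hD
      + (2*((B₁:ℂ)-B₂)*((1+2*(lam:ℂ))*(iteratedDeriv 2 f 0)/2 + (B₁:ℂ)*c₁)
          - (B₁:ℂ)^2*(iteratedDeriv 2 f 0))*hfe1
  have Key1 : 4*(1+3*(lam:ℂ))*D*(iteratedDeriv 3 f 0/6)
      = (B₁:ℂ)*( ((3+10*(lam:ℂ))*(B₁:ℂ)^2 + ((B₁:ℂ)-B₂)*(1+2*(lam:ℂ))^2)*c₂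
        + ((1+2*(lam:ℂ))*(B₁:ℂ)^2 - (1+2*(lam:ℂ))^2*((B₁:ℂ)-B₂))*d₂
        + 4*(1+3*(lam:ℂ))*(B₁:ℂ)^2*c₁^2) := by
    linear_combination D*k1 + 2*(1+3*(lam:ℂ))*k2 + ((B₁:ℂ)*c₂ - (B₁:ℂ)*d₂)*hD
  have Key2 : 2*(1+3*(lam:ℂ))*(1+2*(lam:ℂ))*(iteratedDeriv 3 f 0/6)
      = ((B₁:ℂ)^2 + (1+2*(lam:ℂ))*B₂)*c₁^2 + (1+2*(lam:ℂ))*(B₁:ℂ)*c₂ := by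
    linear_combination (1+2*(lam:ℂ))*hfe2 + ((B₁:ℂ)*c₁)*hfe1
  -- real estimates
  have hA3 : a 3 = iteratedDeriv 3 f 0 / 6 := by rw [ha]; norm_num [Nat.factorial]
  rw [hA3]
  have hx0 : (0:ℝ) ≤ ‖c₁‖ ^ 2 := sq_nonneg _
  have hx1 : ‖c₁‖ ^ 2 ≤ 1 := by nlinarith [norm_nonneg c₁]
  have hd2' : ‖d₂‖ ≤ 1 - ‖c₁‖ ^ 2 := by
    rwa [norm_neg] at hd2
  have hDpos : 0 < ‖D‖ := norm_pos_iff.2 hDne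
  have hMpos : (0:ℝ) < 1 + 3*lam := by linarith
  have hLpos : (0:ℝ) < 1 + 2*lam := by linarith
  have hc2abs : 0 ≤ ‖c₂‖ := norm_nonneg _
  have hd2abs : 0 ≤ ‖d₂‖ := norm_nonneg _
  refine le_min ?_ ?_
  · -- first arm
    have hpa0 : 0 ≤ ‖((3+10*(lam:ℂ))*(B₁:ℂ)^2 + ((B₁:ℂ)-B₂)*(1+2*(lam:ℂ))^2)‖ :=
      norm_nonneg _
    have hqa0 : 0 ≤ ‖((1+2*(lam:ℂ))*(B₁:ℂ)^2 - (1+2*(lam:ℂ))^2*((B₁:ℂ)-B₂))‖ :=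
      norm_nonneg _
    have hPQ : 4*(1+3*lam)*B₁^2 ≤
        ‖((3+10*(lam:ℂ))*(B₁:ℂ)^2 + ((B₁:ℂ)-B₂)*(1+2*(lam:ℂ))^2)‖
        + ‖((1+2*(lam:ℂ))*(B₁:ℂ)^2 - (1+2*(lam:ℂ))^2*((B₁:ℂ)-B₂))‖ := by
      have hsum : ((3+10*(lam:ℂ))*(B₁:ℂ)^2 + ((B₁:ℂ)-B₂)*(1+2*(lam:ℂ))^2)
          + ((1+2*(lam:ℂ))*(B₁:ℂ)^2 - (1+2*(lam:ℂ))^2*((B₁:ℂ)-B₂))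
          = (((4*(1+3*lam)*B₁^2 : ℝ)):ℂ) := by push_cast; ring
      calc 4*(1+3*lam)*B₁^2
          = ‖((((4*(1+3*lam)*B₁^2 : ℝ)):ℂ))‖ := by
            rw [Complex.norm_real, Real.norm_eq_abs, abs_of_nonneg (by nlinarith [sq_nonneg B₁])]
        _ = ‖(((3+10*(lam:ℂ))*(B₁:ℂ)^2 + ((B₁:ℂ)-B₂)*(1+2*(lam:ℂ))^2)
            + ((1+2*(lam:ℂ))*(B₁:ℂ)^2 - (1+2*(lam:ℂ))^2*((B₁:ℂ)-B₂)))‖ := by rw [hsum]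
        _ ≤ _ := norm_add_le _ _
    have habsL : ‖(4*(1+3*(lam:ℂ))*D*(iteratedDeriv 3 f 0/6))‖
        = 4*(1+3*lam)*‖D‖*‖(iteratedDeriv 3 f 0/6)‖ := by
      rw [show (4*(1+3*(lam:ℂ))*D*(iteratedDeriv 3 f 0/6))
          = (((4*(1+3*lam) : ℝ)):ℂ) * (D * (iteratedDeriv 3 f 0/6)) from by push_cast; ring,
        norm_mul, norm_mul, Complex.norm_real, Real.norm_eq_abs, abs_of_pos (by linarith)]
      ring
    have hlast : ‖(4*(1+3*(lam:ℂ))*(B₁:ℂ)^2*c₁^2)‖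
        = 4*(1+3*lam)*B₁^2*‖c₁‖^2 := by
      rw [show (4*(1+3*(lam:ℂ))*(B₁:ℂ)^2*c₁^2)
          = (((4*(1+3*lam)*B₁^2 : ℝ)):ℂ) * c₁^2 from by push_cast; ring,
        norm_mul, norm_pow, Complex.norm_real, Real.norm_eq_abs, abs_of_nonneg (by nlinarith [sq_nonneg B₁])]
    have tri : ‖( ((3+10*(lam:ℂ))*(B₁:ℂ)^2 + ((B₁:ℂ)-B₂)*(1+2*(lam:ℂ))^2)*c₂
        + ((1+2*(lam:ℂ))*(B₁:ℂ)^2 - (1+2*(lam:ℂ))^2*((B₁:ℂ)-B₂))*d₂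
        + 4*(1+3*(lam:ℂ))*(B₁:ℂ)^2*c₁^2)‖
        ≤ ‖((3+10*(lam:ℂ))*(B₁:ℂ)^2 + ((B₁:ℂ)-B₂)*(1+2*(lam:ℂ))^2)‖
            * ‖c₂‖
          + ‖((1+2*(lam:ℂ))*(B₁:ℂ)^2 - (1+2*(lam:ℂ))^2*((B₁:ℂ)-B₂))‖
            * ‖d₂‖
          + 4*(1+3*lam)*B₁^2*‖c₁‖^2 := by
      calc ‖_‖ ≤ ‖( ((3+10*(lam:ℂ))*(B₁:ℂ)^2 + ((B₁:ℂ)-B₂)*(1+2*(lam:ℂ))^2)*c₂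
            + ((1+2*(lam:ℂ))*(B₁:ℂ)^2 - (1+2*(lam:ℂ))^2*((B₁:ℂ)-B₂))*d₂)‖
            + ‖(4*(1+3*(lam:ℂ))*(B₁:ℂ)^2*c₁^2)‖ := norm_add_le _ _
        _ ≤ _ := by
            rw [hlast]
            gcongr
            calc ‖_‖ ≤ _ := norm_add_le _ _
              _ = _ := by rw [norm_mul, norm_mul]
    have main1 : 4*(1+3*lam)*‖D‖*‖(iteratedDeriv 3 f 0/6)‖
        ≤ B₁*(‖((3+10*(lam:ℂ))*(B₁:ℂ)^2 + ((B₁:ℂ)-B₂)*(1+2*(lam:ℂ))^2)‖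
          + ‖((1+2*(lam:ℂ))*(B₁:ℂ)^2 - (1+2*(lam:ℂ))^2*((B₁:ℂ)-B₂))‖) := by
      have e1 : 4*(1+3*lam)*‖D‖*‖(iteratedDeriv 3 f 0/6)‖
          = B₁ * ‖( ((3+10*(lam:ℂ))*(B₁:ℂ)^2 + ((B₁:ℂ)-B₂)*(1+2*(lam:ℂ))^2)*c₂
            + ((1+2*(lam:ℂ))*(B₁:ℂ)^2 - (1+2*(lam:ℂ))^2*((B₁:ℂ)-B₂))*d₂
            + 4*(1+3*(lam:ℂ))*(B₁:ℂ)^2*c₁^2)‖ := by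
        rw [← habsL, Key1, norm_mul, Complex.norm_real, Real.norm_eq_abs, abs_of_pos hB₁]
      rw [e1]
      have step1 : ‖( ((3+10*(lam:ℂ))*(B₁:ℂ)^2 + ((B₁:ℂ)-B₂)*(1+2*(lam:ℂ))^2)*c₂
          + ((1+2*(lam:ℂ))*(B₁:ℂ)^2 - (1+2*(lam:ℂ))^2*((B₁:ℂ)-B₂))*d₂
          + 4*(1+3*(lam:ℂ))*(B₁:ℂ)^2*c₁^2)‖
          ≤ ‖((3+10*(lam:ℂ))*(B₁:ℂ)^2 + ((B₁:ℂ)-B₂)*(1+2*(lam:ℂ))^2)‖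
            + ‖((1+2*(lam:ℂ))*(B₁:ℂ)^2 - (1+2*(lam:ℂ))^2*((B₁:ℂ)-B₂))‖ := by
        have hstep : ‖((3+10*(lam:ℂ))*(B₁:ℂ)^2 + ((B₁:ℂ)-B₂)*(1+2*(lam:ℂ))^2)‖
              * ‖c₂‖
            + ‖((1+2*(lam:ℂ))*(B₁:ℂ)^2 - (1+2*(lam:ℂ))^2*((B₁:ℂ)-B₂))‖
              * ‖d₂‖
            + 4*(1+3*lam)*B₁^2*‖c₁‖^2
            ≤ ‖((3+10*(lam:ℂ))*(B₁:ℂ)^2 + ((B₁:ℂ)-B₂)*(1+2*(lam:ℂ))^2)‖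
              * (1 - ‖c₁‖^2)
            + ‖((1+2*(lam:ℂ))*(B₁:ℂ)^2 - (1+2*(lam:ℂ))^2*((B₁:ℂ)-B₂))‖
              * (1 - ‖c₁‖^2)
            + 4*(1+3*lam)*B₁^2*‖c₁‖^2 := by
          have t1 := mul_le_mul_of_nonneg_left hc2 hpa0
          have t2 := mul_le_mul_of_nonneg_left hd2' hqa0
          linarith
        have hprod : 0 ≤ (‖((3+10*(lam:ℂ))*(B₁:ℂ)^2 + ((B₁:ℂ)-B₂)*(1+2*(lam:ℂ))^2)‖
            + ‖((1+2*(lam:ℂ))*(B₁:ℂ)^2 - (1+2*(lam:ℂ))^2*((B₁:ℂ)-B₂))‖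
            - 4*(1+3*lam)*B₁^2) * (‖c₁‖^2) :=
          mul_nonneg (by linarith) hx0
        have := tri
        nlinarith [this, hstep, hprod]
      exact mul_le_mul_of_nonneg_left step1 hB₁.le
    have h4D : 0 < 4*(1+3*lam)*‖D‖ := by
      apply mul_pos (by linarith) hDpos
    rw [div_mul_eq_mul_div, le_div_iff₀ h4D]
    linarith [main1]
  · -- second arm
    have hta0 : 0 ≤ ‖((B₁:ℂ)^2 - (1+2*(lam:ℂ))*((B₁:ℂ)-B₂))‖ := norm_nonneg _
    have hA2 : ‖((B₁:ℂ)^2 + (1+2*(lam:ℂ))*B₂)‖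
        ≤ ‖((B₁:ℂ)^2 - (1+2*(lam:ℂ))*((B₁:ℂ)-B₂))‖ + (1+2*lam)*B₁ := by
      have hsplit : (B₁:ℂ)^2 + (1+2*(lam:ℂ))*B₂
          = ((B₁:ℂ)^2 - (1+2*(lam:ℂ))*((B₁:ℂ)-B₂)) + ((((1+2*lam)*B₁ : ℝ)):ℂ) := by
        push_cast; ring
      calc ‖((B₁:ℂ)^2 + (1+2*(lam:ℂ))*B₂)‖
          = ‖(((B₁:ℂ)^2 - (1+2*(lam:ℂ))*((B₁:ℂ)-B₂)) + ((((1+2*lam)*B₁ : ℝ)):ℂ))‖ := by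
            rw [hsplit]
        _ ≤ ‖((B₁:ℂ)^2 - (1+2*(lam:ℂ))*((B₁:ℂ)-B₂))‖
            + ‖(((((1+2*lam)*B₁ : ℝ)):ℂ))‖ := norm_add_le _ _
        _ = _ := by rw [Complex.norm_real, Real.norm_eq_abs, abs_of_pos (by nlinarith)]
    have habsL2 : ‖(2*(1+3*(lam:ℂ))*(1+2*(lam:ℂ))*(iteratedDeriv 3 f 0/6))‖
        = 2*(1+3*lam)*(1+2*lam)*‖(iteratedDeriv 3 f 0/6)‖ := by
      rw [show (2*(1+3*(lam:ℂ))*(1+2*(lam:ℂ))*(iteratedDeriv 3 f 0/6))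
          = (((2*(1+3*lam)*(1+2*lam) : ℝ)):ℂ) * (iteratedDeriv 3 f 0/6) from by push_cast; ring,
        norm_mul, Complex.norm_real, Real.norm_eq_abs, abs_of_pos (by nlinarith)]
    have hLB1 : ‖((1+2*(lam:ℂ))*(B₁:ℂ))‖ = (1+2*lam)*B₁ := by
      rw [show ((1+2*(lam:ℂ))*(B₁:ℂ)) = ((((1+2*lam)*B₁ : ℝ)):ℂ) from by push_cast; ring,
        Complex.norm_real, Real.norm_eq_abs, abs_of_pos (by nlinarith)]
    have tri2 : ‖(((B₁:ℂ)^2 + (1+2*(lam:ℂ))*B₂)*c₁^2 + (1+2*(lam:ℂ))*(B₁:ℂ)*c₂)‖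
        ≤ ‖((B₁:ℂ)^2 + (1+2*(lam:ℂ))*B₂)‖ * ‖c₁‖^2
          + (1+2*lam)*B₁*‖c₂‖ := by
      calc ‖_‖ ≤ ‖(((B₁:ℂ)^2 + (1+2*(lam:ℂ))*B₂)*c₁^2)‖
            + ‖((1+2*(lam:ℂ))*(B₁:ℂ)*c₂)‖ := norm_add_le _ _
        _ = _ := by rw [norm_mul, norm_pow, norm_mul, hLB1]
    have main2 : 2*(1+3*lam)*(1+2*lam)*‖(iteratedDeriv 3 f 0/6)‖
        ≤ ‖((B₁:ℂ)^2 - (1+2*(lam:ℂ))*((B₁:ℂ)-B₂))‖ + (1+2*lam)*B₁ := by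
      have e2 : 2*(1+3*lam)*(1+2*lam)*‖(iteratedDeriv 3 f 0/6)‖
          = ‖(((B₁:ℂ)^2 + (1+2*(lam:ℂ))*B₂)*c₁^2 + (1+2*(lam:ℂ))*(B₁:ℂ)*c₂)‖ := by
        rw [← habsL2, Key2]
      rw [e2]
      have hp1 := mul_le_mul_of_nonneg_right hA2 hx0
      have hp2 : (1+2*lam)*B₁*‖c₂‖
          ≤ (1+2*lam)*B₁*(1 - ‖c₁‖^2) :=
        mul_le_mul_of_nonneg_left hc2 (by nlinarith)
      have hp4 : ((1+2*lam)*B₁)*(1 - ‖c₁‖^2)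
          ≤ (‖((B₁:ℂ)^2 - (1+2*(lam:ℂ))*((B₁:ℂ)-B₂))‖ + (1+2*lam)*B₁)
            *(1 - ‖c₁‖^2) :=
        mul_le_mul_of_nonneg_right (by linarith) (by linarith)
      have hAqx : ‖((B₁:ℂ)^2 + (1+2*(lam:ℂ))*B₂)‖ * ‖c₁‖^2
          ≤ (‖((B₁:ℂ)^2 - (1+2*(lam:ℂ))*((B₁:ℂ)-B₂))‖ + (1+2*lam)*B₁)
            * ‖c₁‖^2 := hp1
      nlinarith [tri2, hAqx, hp2, hp4]
    have h2ML : 0 < 2*(1+3*lam)*(1+2*lam) := by nlinarith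
    rw [show (1:ℝ)/(2*(1+3*lam)*(1+2*lam))
        * (‖((B₁:ℂ)^2 - (1+2*(lam:ℂ))*((B₁:ℂ)-B₂))‖ + (1+2*lam)*B₁)
        = (‖((B₁:ℂ)^2 - (1+2*(lam:ℂ))*((B₁:ℂ)-B₂))‖ + (1+2*lam)*B₁)
          / (2*(1+3*lam)*(1+2*lam)) from by ring, le_div_iff₀ h2ML]
    linarith [main2]
end
end

section
/- Let 0 < β ≤ 1 and let f ∈ SS_σ(β) have Taylor coefficients aₙ. Then |a₂| ≤ 2β/√(1+β); moreover |a₃| ≤ β if 0 < β ≤ 1/3 and |a₃| ≤ 4β²/(1+β) if 1/3 ≤ β ≤ 1. -/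
open Metric Set

noncomputable section

/-- Membership in `SS_σ(β)`: strongly bi-starlike of order `β`. -/
def MemSSbeta (β : ℝ) (f g : ℂ → ℂ) : Prop :=
  IsBiUnivalent f g ∧
  (∃ Q : ℂ → ℂ, DifferentiableOn ℂ Q (ball 0 1) ∧ Q 0 = 1 ∧
    (∀ z ∈ ball (0:ℂ) 1, 0 < (Q z).re) ∧
    (∀ z ∈ ball (0:ℂ) 1, z ≠ 0 → z * deriv f z / f z = Q z ^ (β : ℂ))) ∧
  (∃ P : ℂ → ℂ, DifferentiableOn ℂ P (ball 0 1) ∧ P 0 = 1 ∧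
    (∀ w ∈ ball (0:ℂ) 1, 0 < (P w).re) ∧
    (∀ w ∈ ball (0:ℂ) 1, w ≠ 0 → w * deriv g w / g w = P w ^ (β : ℂ)))

/-!
Write `fₙ, gₙ` for the `n`-th derivatives at `0`. Differentiating `z f'(z) = f(z) Q(z)^β` twice
and three times at `0` expresses `f₂, f₃` through `Q'(0), Q''(0)`, and likewise for `g` and `P`;
differentiating `f (g w) = w` gives `g₂ = -f₂` and `g₃ = 3 f₂² - f₃`. Eliminating
`Q'(0) = -P'(0)` leaves
`2 (1 + β) a₂² = β² (Q''(0) + P''(0))` and `8 (1 + β) a₃ = β ((5β + 1) Q''(0) + (3β - 1) P''(0))`,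
while `|Q''(0)|, |P''(0)| ≤ 4` by Carathéodory's lemma, which follows from the Schwarz lemma
applied to the Cayley transform of the even part of `Q`.
-/

open Filter Topology

section Leibniz

variable {𝕜 : Type*} [NontriviallyNormedField 𝕜] [CompleteSpace 𝕜]

theorem iteratedDeriv_succ_id_mul_zero {u : 𝕜 → 𝕜} (hu : AnalyticAt 𝕜 u 0) (n : ℕ) :
    iteratedDeriv (n + 1) (fun z => z * u z) 0 = (n + 1 : ℕ) * iteratedDeriv n u 0 := by
  rw [iteratedDeriv_fun_mul (f := fun z => z) contDiffAt_id hu.contDiffAt,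
    Finset.sum_eq_single 1]
  · simp [iteratedDeriv_fun_id_zero]
  · intro i _ hi
    simp [iteratedDeriv_fun_id_zero, hi]
  · simp

theorem iteratedDeriv_of_id_mul_deriv_eq_mul {u R : 𝕜 → 𝕜} (hu : AnalyticAt 𝕜 u 0)
    (hR : AnalyticAt 𝕜 R 0) (h : (fun z => z * deriv u z) =ᶠ[𝓝 0] fun z => u z * R z)
    (n : ℕ) :
    (n + 1 : ℕ) * iteratedDeriv (n + 1) u 0 = ∑ i ∈ Finset.range (n + 2),
      (n + 1).choose i * iteratedDeriv i u 0 * iteratedDeriv (n + 1 - i) R 0 := by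
  rw [iteratedDeriv_succ', ← iteratedDeriv_succ_id_mul_zero hu.deriv,
    h.iteratedDeriv_eq, iteratedDeriv_fun_mul hu.contDiffAt hR.contDiffAt]

theorem iteratedDeriv_two_three_of_id_mul_deriv_eq_mul {u R : 𝕜 → 𝕜} (hu : AnalyticAt 𝕜 u 0)
    (hR : AnalyticAt 𝕜 R 0) (hR0 : R 0 = 1)
    (h : (fun z => z * deriv u z) =ᶠ[𝓝 0] fun z => u z * R z) :
    u 0 = 0 ∧ iteratedDeriv 2 u 0 = 2 * deriv u 0 * deriv R 0 ∧
      2 * iteratedDeriv 3 u 0 =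
        3 * deriv u 0 * iteratedDeriv 2 R 0 + 3 * iteratedDeriv 2 u 0 * deriv R 0 := by
  have hu0 : u 0 = 0 := by simpa [hR0] using h.eq_of_nhds.symm
  have h2 : 2 * iteratedDeriv 2 u 0 = 2 * deriv u 0 * deriv R 0 + iteratedDeriv 2 u 0 := by
    simpa [Finset.sum_range_succ, hu0, hR0] using iteratedDeriv_of_id_mul_deriv_eq_mul hu hR h 1
  have h3 : 3 * iteratedDeriv 3 u 0 = 3 * deriv u 0 * iteratedDeriv 2 R 0 +
      3 * iteratedDeriv 2 u 0 * deriv R 0 + iteratedDeriv 3 u 0 := by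
    simpa [Finset.sum_range_succ, hu0, hR0] using iteratedDeriv_of_id_mul_deriv_eq_mul hu hR h 2
  exact ⟨hu0, by linear_combination h2, by linear_combination h3⟩

theorem iteratedDeriv_of_comp_eq_id {f g : 𝕜 → 𝕜} (hf : AnalyticAt 𝕜 f 0)
    (hg : AnalyticAt 𝕜 g 0) (hg0 : g 0 = 0) (hf1 : deriv f 0 = 1)
    (h : ∀ᶠ w in 𝓝 0, f (g w) = w) :
    deriv g 0 = 1 ∧ iteratedDeriv 2 g 0 = -iteratedDeriv 2 f 0 ∧
      iteratedDeriv 3 g 0 = 3 * iteratedDeriv 2 f 0 ^ 2 - iteratedDeriv 3 f 0 := by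
  have hcomp : f ∘ g =ᶠ[𝓝 0] id := h
  have hf' : AnalyticAt 𝕜 f (g 0) := by rwa [hg0]
  have h1 : deriv g 0 = 1 := by
    simpa [deriv_comp _ hf'.differentiableAt hg.differentiableAt, hg0, hf1] using hcomp.deriv_eq
  have h2 : iteratedDeriv 2 f 0 + iteratedDeriv 2 g 0 = 0 := by
    simpa [iteratedDeriv_comp_two hf'.contDiffAt hg.contDiffAt, iteratedDeriv_id, hg0, hf1, h1]
      using hcomp.iteratedDeriv_eq 2
  have h3 : iteratedDeriv 3 f 0 + 3 * iteratedDeriv 2 f 0 * iteratedDeriv 2 g 0 +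
      iteratedDeriv 3 g 0 = 0 := by
    simpa [iteratedDeriv_comp_three hf'.contDiffAt hg.contDiffAt, iteratedDeriv_id, hg0, hf1, h1]
      using hcomp.iteratedDeriv_eq 3
  exact ⟨h1, by linear_combination h2, by linear_combination h3 - 3 * iteratedDeriv 2 f 0 * h2⟩

theorem eventuallyEq_id_mul_deriv_of_div_eq {u R : 𝕜 → 𝕜} {s : Set 𝕜} (hs : s ∈ 𝓝 0)
    (hu : AnalyticAt 𝕜 u 0) (hR : ContinuousAt R 0) (hRne : ∀ z ∈ s, R z ≠ 0)
    (h : ∀ z ∈ s, z ≠ 0 → z * deriv u z / u z = R z) :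
    (fun z => z * deriv u z) =ᶠ[𝓝 0] fun z => u z * R z := by
  have hlhs : ContinuousAt (fun z => z * deriv u z) 0 := continuousAt_id.mul hu.deriv.continuousAt
  have hrhs : ContinuousAt (fun z => u z * R z) 0 := hu.continuousAt.mul hR
  refine (hlhs.eventuallyEq_nhds_iff_eventuallyEq_nhdsNE hrhs).1 ?_
  filter_upwards [nhdsWithin_le_nhds hs, self_mem_nhdsWithin] with z hz hz0
  -- `u z = 0` would make the quotient `0` by the convention `x / 0 = 0`
  have huz : u z ≠ 0 := fun huz => hRne z hz (by simpa [huz] using (h z hz hz0).symm)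
  exact ((div_eq_iff huz).1 (h z hz hz0)).trans (mul_comm _ _)

end Leibniz

section Cpow

theorem iteratedDeriv_two_cpow_const_one (c : ℂ) :
    iteratedDeriv 2 (fun x : ℂ => x ^ c) 1 = c * (c - 1) := by
  have hderiv : deriv (fun x : ℂ => x ^ c) =ᶠ[𝓝 1] fun x => c * x ^ (c - 1) := by
    filter_upwards [Complex.isOpen_slitPlane.mem_nhds Complex.one_mem_slitPlane] with x hx
    exact Complex.deriv_cpow_const hx
  rw [iteratedDeriv_succ, iteratedDeriv_one, hderiv.deriv_eq, deriv_const_mul_field,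
    Complex.deriv_cpow_const Complex.one_mem_slitPlane, Complex.one_cpow, mul_one]

variable {Q : ℂ → ℂ} (c : ℂ)

theorem deriv_cpow_const_of_eq_one (hQ : DifferentiableAt ℂ Q 0) (hQ0 : Q 0 = 1) :
    deriv (fun z => Q z ^ c) 0 = c * deriv Q 0 := by
  rw [deriv_cpow_const hQ (by simp [hQ0]), hQ0, Complex.one_cpow, mul_one]

theorem iteratedDeriv_two_cpow_const_of_eq_one (hQ : AnalyticAt ℂ Q 0) (hQ0 : Q 0 = 1) :
    iteratedDeriv 2 (fun z => Q z ^ c) 0 =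
      c * iteratedDeriv 2 Q 0 + c * (c - 1) * deriv Q 0 ^ 2 := by
  have hpow : AnalyticAt ℂ (fun x : ℂ => x ^ c) (Q 0) :=
    analyticAt_id.cpow analyticAt_const (by simp [hQ0])
  rw [← Function.comp_def (fun x : ℂ => x ^ c) Q,
    iteratedDeriv_comp_two hpow.contDiffAt hQ.contDiffAt, hQ0, iteratedDeriv_two_cpow_const_one,
    Complex.deriv_cpow_const Complex.one_mem_slitPlane, Complex.one_cpow, mul_one]
  ring

theorem iteratedDeriv_two_three_of_id_mul_deriv_div_eq_cpow {u : ℂ → ℂ}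
    (hu : DifferentiableOn ℂ u (ball 0 1)) (hQ : DifferentiableOn ℂ Q (ball 0 1))
    (hQ0 : Q 0 = 1) (hre : ∀ z ∈ ball (0 : ℂ) 1, 0 < (Q z).re)
    (h : ∀ z ∈ ball (0 : ℂ) 1, z ≠ 0 → z * deriv u z / u z = Q z ^ c) :
    u 0 = 0 ∧ iteratedDeriv 2 u 0 = 2 * deriv u 0 * (c * deriv Q 0) ∧
      2 * iteratedDeriv 3 u 0 =
        3 * deriv u 0 * (c * iteratedDeriv 2 Q 0 + c * (c - 1) * deriv Q 0 ^ 2) +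
          3 * iteratedDeriv 2 u 0 * (c * deriv Q 0) := by
  have hball : ball (0 : ℂ) 1 ∈ 𝓝 0 := ball_mem_nhds 0 one_pos
  have hQa : AnalyticAt ℂ Q 0 := hQ.analyticAt hball
  have hRa : AnalyticAt ℂ (fun z => Q z ^ c) 0 :=
    hQa.cpow analyticAt_const (by simp [hQ0])
  have hRne : ∀ z ∈ ball (0 : ℂ) 1, Q z ^ c ≠ 0 := fun z hz hQz =>
    ((hre z hz).ne' (by simp [((Complex.cpow_eq_zero_iff _ _).1 hQz).1]))
  have hrel := eventuallyEq_id_mul_deriv_of_div_eq hball (hu.analyticAt hball)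
    hRa.continuousAt hRne h
  rw [← deriv_cpow_const_of_eq_one c hQa.differentiableAt hQ0,
    ← iteratedDeriv_two_cpow_const_of_eq_one c hQa hQ0]
  exact iteratedDeriv_two_three_of_id_mul_deriv_eq_mul (hu.analyticAt hball) hRa
    (by simp [hQ0]) hrel

end Cpow

theorem norm_iteratedDeriv_two_le_two_of_mapsTo_ball {ω : ℂ → ℂ}
    (hd : DifferentiableOn ℂ ω (ball 0 1)) (hmaps : MapsTo ω (ball 0 1) (closedBall 0 1))
    (h0 : ω 0 = 0) (h1 : deriv ω 0 = 0) : ‖iteratedDeriv 2 ω 0‖ ≤ 2 := by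
  let φ := dslope ω 0
  have hφd : DifferentiableOn ℂ φ (ball 0 1) :=
    (Complex.differentiableOn_dslope (ball_mem_nhds 0 one_pos)).2 hd
  have hφmaps : MapsTo φ (ball 0 1) (closedBall (φ 0) 1) := by
    intro z hz
    rw [show φ 0 = 0 from (dslope_same ω 0).trans h1, mem_closedBall_zero_iff]
    simpa using Complex.norm_dslope_le_div_of_mapsTo_ball hd (by rwa [h0]) hz
  have hω : ω = fun z => z * φ z :=
    funext fun z => by simpa [h0] using (sub_smul_dslope ω 0 z).symm
  have h2 : iteratedDeriv 2 ω 0 = 2 * deriv φ 0 := by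
    simpa [← hω, one_add_one_eq_two] using
      iteratedDeriv_succ_id_mul_zero (hφd.analyticAt (ball_mem_nhds 0 one_pos)) 1
  rw [h2, norm_mul, Complex.norm_two]
  linarith [Complex.norm_deriv_le_one_of_mapsTo_ball hφd hφmaps one_pos]

theorem norm_sub_two_le_norm_add_two {w : ℂ} (hw : 0 ≤ w.re) : ‖w - 2‖ ≤ ‖w + 2‖ := by
  rw [← sq_le_sq₀ (norm_nonneg _) (norm_nonneg _), Complex.sq_norm, Complex.sq_norm,
    Complex.normSq_apply, Complex.normSq_apply]
  simp only [Complex.sub_re, Complex.add_re, Complex.sub_im, Complex.add_im, Complex.re_ofNat,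
    Complex.im_ofNat]
  nlinarith

theorem iteratedDeriv_add_comp_neg {Q : ℂ → ℂ} (hQ : AnalyticAt ℂ Q 0) (n : ℕ) :
    iteratedDeriv n (fun z => Q z + Q (-z)) 0 = (1 + (-1) ^ n) * iteratedDeriv n Q 0 := by
  rw [iteratedDeriv_fun_add (f := Q) (g := fun z => Q (-z)) hQ.contDiffAt
    (hQ.comp_of_eq (by fun_prop) neg_zero).contDiffAt, iteratedDeriv_comp_neg, neg_zero,
    smul_eq_mul]
  ring

theorem norm_iteratedDeriv_two_le_four_of_re_pos {Q : ℂ → ℂ}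
    (hd : DifferentiableOn ℂ Q (ball 0 1)) (hQ0 : Q 0 = 1)
    (hre : ∀ z ∈ ball (0 : ℂ) 1, 0 < (Q z).re) : ‖iteratedDeriv 2 Q 0‖ ≤ 4 := by
  have hball : ball (0 : ℂ) 1 ∈ 𝓝 0 := ball_mem_nhds 0 one_pos
  have hneg : MapsTo Neg.neg (ball (0 : ℂ) 1) (ball 0 1) := fun z hz => by simpa using hz
  have hQa := hd.analyticAt hball
  -- passing to the even part makes the Cayley transform `ω` below vanish to second order
  set h : ℂ → ℂ := fun z => Q z + Q (-z)
  have hhd : DifferentiableOn ℂ h (ball 0 1) := hd.add (hd.comp (by fun_prop) hneg)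
  have hhre : ∀ z ∈ ball (0 : ℂ) 1, 0 < (h z).re := fun z hz =>
    add_pos (hre z hz) (hre (-z) (hneg hz))
  have hh0 : h 0 = 2 := by norm_num [h, hQ0]
  have hh1 : deriv h 0 = 0 := by simpa using iteratedDeriv_add_comp_neg hQa 1
  have hh2 : iteratedDeriv 2 h 0 = 2 * iteratedDeriv 2 Q 0 := by
    simpa [one_add_one_eq_two] using iteratedDeriv_add_comp_neg hQa 2
  have hden : ∀ z ∈ ball (0 : ℂ) 1, h z + 2 ≠ 0 := fun z hz hz0 => by
    have := congrArg Complex.re hz0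
    simp only [Complex.add_re, Complex.re_ofNat, Complex.zero_re] at this
    linarith [hhre z hz]
  set ω : ℂ → ℂ := fun z => (h z - 2) / (h z + 2)
  have hωd : DifferentiableOn ℂ ω (ball 0 1) := (hhd.sub_const 2).div (hhd.add_const 2) hden
  have hωmaps : MapsTo ω (ball 0 1) (closedBall 0 1) := fun z hz => by
    rw [mem_closedBall_zero_iff, norm_div, div_le_one (norm_pos_iff.2 (hden z hz))]
    exact norm_sub_two_le_norm_add_two (hhre z hz).le
  have hω0 : ω 0 = 0 := by simp [ω, hh0]
  have hmul : (fun z => ω z * (h z + 2)) =ᶠ[𝓝 0] fun z => h z - 2 := by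
    filter_upwards [hball] with z hz using div_mul_cancel₀ _ (hden z hz)
  have hleib : ∀ n, iteratedDeriv n (fun z => ω z * (h z + 2)) 0 = ∑ i ∈ Finset.range (n + 1),
      n.choose i * iteratedDeriv i ω 0 * iteratedDeriv (n - i) (fun z => h z + 2) 0 :=
    fun n => iteratedDeriv_fun_mul (hωd.analyticAt hball).contDiffAt
      ((hhd.analyticAt hball).add analyticAt_const).contDiffAt
  have hshift : ∀ n, 0 < n → iteratedDeriv n (fun z => h z + 2) 0 = iteratedDeriv n h 0 :=
    fun n hn => by simpa only [add_comm] using iteratedDeriv_const_add hn (2 : ℂ) (f := h)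
  have hω1 : deriv ω 0 = 0 := by
    simpa [hleib, Finset.sum_range_succ, hshift, hω0, hh0, hh1] using hmul.iteratedDeriv_eq 1
  have hω2 : iteratedDeriv 2 ω 0 * 4 = 2 * iteratedDeriv 2 Q 0 := by
    simpa [hleib, Finset.sum_range_succ, hshift, hω0, hω1, hh0, hh1, hh2, two_add_two_eq_four,
      iteratedDeriv_fun_sub (hhd.analyticAt hball).contDiffAt contDiffAt_const,
      iteratedDeriv_const] using hmul.iteratedDeriv_eq 2
  calc ‖iteratedDeriv 2 Q 0‖ = ‖2 * iteratedDeriv 2 ω 0‖ := by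
        congr 1; linear_combination -hω2 / 2
    _ ≤ 4 := by
        rw [norm_mul, Complex.norm_two]
        linarith [norm_iteratedDeriv_two_le_two_of_mapsTo_ball hωd hωmaps hω0 hω1]

theorem MemSSbeta.iteratedDeriv_two_three_eq {β : ℝ} {f g : ℂ → ℂ} (h : MemSSbeta β f g)
    (hβ : β ≠ 0) :
    ∃ q p : ℂ, ‖q‖ ≤ 4 ∧ ‖p‖ ≤ 4 ∧
      2 * (1 + β) * (iteratedDeriv 2 f 0 / 2) ^ 2 = β ^ 2 * (q + p) ∧
      8 * (1 + β) * (iteratedDeriv 3 f 0 / 6) = β * ((5 * β + 1) * q + (3 * β - 1) * p) := by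
  obtain ⟨⟨hfd, -, hf1, -, hgd, -, hfg⟩, ⟨Q, hQd, hQ0, hQre, hQ⟩, ⟨P, hPd, hP0, hPre, hP⟩⟩ := h
  have hball : ball (0 : ℂ) 1 ∈ 𝓝 0 := ball_mem_nhds 0 one_pos
  obtain ⟨-, hf2, hf3⟩ :=
    iteratedDeriv_two_three_of_id_mul_deriv_div_eq_cpow β hfd hQd hQ0 hQre hQ
  obtain ⟨hg0, hg2, hg3⟩ :=
    iteratedDeriv_two_three_of_id_mul_deriv_div_eq_cpow β hgd hPd hP0 hPre hP
  have hinv : ∀ᶠ w in 𝓝 0, f (g w) = w := by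
    filter_upwards [ball_mem_nhds (0 : ℂ) (by norm_num : (0 : ℝ) < 1 / 4)] with w hw
    exact hfg w (mem_ball_zero_iff.1 hw)
  obtain ⟨hg1, hc2, hc3⟩ := iteratedDeriv_of_comp_eq_id (hfd.analyticAt hball)
    (hgd.analyticAt hball) hg0 hf1 hinv
  simp only [hf1, hg1, mul_one] at hf2 hf3 hg2 hg3
  have hβ' : (β : ℂ) ≠ 0 := Complex.ofReal_ne_zero.2 hβ
  have hp1 : deriv P 0 = -deriv Q 0 :=
    mul_left_cancel₀ (mul_ne_zero two_ne_zero hβ') (by linear_combination hc2 - hg2 - hf2)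
  rw [hc3, hc2, hf2, hp1] at hg3
  rw [hf2] at hf3
  have hq1 : 2 * (1 + β) * deriv Q 0 ^ 2 = iteratedDeriv 2 Q 0 + iteratedDeriv 2 P 0 :=
    mul_left_cancel₀ (mul_ne_zero three_ne_zero hβ') (by linear_combination hf3 + hg3)
  refine ⟨_, _, norm_iteratedDeriv_two_le_four_of_re_pos hQd hQ0 hQre,
    norm_iteratedDeriv_two_le_four_of_re_pos hPd hP0 hPre, ?_, ?_⟩
  · rw [hf2]
    linear_combination β ^ 2 * hq1
  · linear_combination 2 / 3 * (1 + β) * hf3 + (3 * β - 1) * β * hq1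

theorem norm_le_of_two_mul_one_add_mul_sq_eq {β : ℝ} {a q p : ℂ} (hβ : 0 < β) (hq : ‖q‖ ≤ 4)
    (hp : ‖p‖ ≤ 4) (h : 2 * (1 + β) * a ^ 2 = β ^ 2 * (q + p)) :
    ‖a‖ ≤ 2 * β / √(1 + β) := by
  have hnorm : 2 * (1 + β) * ‖a‖ ^ 2 = β ^ 2 * ‖q + p‖ := by
    have h' : ((2 * (1 + β) : ℝ) : ℂ) * a ^ 2 = ((β ^ 2 : ℝ) : ℂ) * (q + p) := by
      push_cast; exact h
    have := congrArg norm h'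
    rwa [norm_mul, norm_mul, norm_pow, Complex.norm_of_nonneg (by positivity),
      Complex.norm_of_nonneg (by positivity)] at this
  have hsqrt : 0 < √(1 + β) := Real.sqrt_pos.2 (by linarith)
  rw [le_div_iff₀ hsqrt]
  refine le_of_pow_le_pow_left₀ two_ne_zero (by positivity) ?_
  rw [mul_pow, Real.sq_sqrt (by linarith)]
  nlinarith [norm_add_le q p]

theorem norm_le_of_eight_mul_one_add_mul_eq {β : ℝ} {a q p : ℂ} (hβ : 0 < β) (hq : ‖q‖ ≤ 4)
    (hp : ‖p‖ ≤ 4) (h : 8 * (1 + β) * a = β * ((5 * β + 1) * q + (3 * β - 1) * p)) :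
    ‖a‖ ≤ β * (5 * β + 1 + |3 * β - 1|) / (2 * (1 + β)) := by
  have h' : ((8 * (1 + β) : ℝ) : ℂ) * a =
      (β : ℂ) * (((5 * β + 1 : ℝ) : ℂ) * q + ((3 * β - 1 : ℝ) : ℂ) * p) := by
    push_cast; exact h
  have hnorm := congrArg norm h'
  rw [norm_mul, norm_mul, Complex.norm_of_nonneg (by positivity),
    Complex.norm_of_nonneg hβ.le] at hnorm
  have hcomb := norm_add_le (((5 * β + 1 : ℝ) : ℂ) * q) (((3 * β - 1 : ℝ) : ℂ) * p)
  rw [norm_mul, norm_mul, Complex.norm_of_nonneg (by positivity), Complex.norm_real,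
    Real.norm_eq_abs] at hcomb
  have hbound : (5 * β + 1) * ‖q‖ + |3 * β - 1| * ‖p‖ ≤ 4 * (5 * β + 1 + |3 * β - 1|) := by
    nlinarith [abs_nonneg (3 * β - 1)]
  rw [le_div_iff₀ (by linarith)]
  nlinarith [mul_le_mul_of_nonneg_left (hcomb.trans hbound) hβ.le]

theorem stmt_18_general
    (β : ℝ) (f g : ℂ → ℂ) (h : MemSSbeta β f g)
    (a : ℕ → ℂ) (ha : ∀ n, a n = iteratedDeriv n f 0 / (n.factorial : ℂ))
    (hβ0 : 0 < β) :
    ‖a 2‖ ≤ 2*β/Real.sqrt (1+β) ∧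
    (β ≤ 1/3 → ‖a 3‖ ≤ β) ∧
    (1/3 ≤ β → ‖a 3‖ ≤ 4*β^2/(1+β)) := by
  obtain ⟨q, p, hq, hp, h2, h3⟩ := h.iteratedDeriv_two_three_eq hβ0.ne'
  have ha2 : a 2 = iteratedDeriv 2 f 0 / 2 := by norm_num [ha, Nat.factorial]
  have ha3 : a 3 = iteratedDeriv 3 f 0 / 6 := by norm_num [ha, Nat.factorial]
  rw [← ha2] at h2
  rw [← ha3] at h3
  have hbound3 := norm_le_of_eight_mul_one_add_mul_eq hβ0 hq hp h3
  refine ⟨norm_le_of_two_mul_one_add_mul_sq_eq hβ0 hq hp h2, fun hβ => ?_, fun hβ => ?_⟩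
  · rw [abs_of_nonpos (by linarith)] at hbound3
    exact hbound3.trans_eq (by field_simp; ring)
  · rw [abs_of_nonneg (by linarith)] at hbound3
    exact hbound3.trans_eq (by field_simp; ring)

theorem stmt_18
    (β : ℝ) (f g : ℂ → ℂ) (h : MemSSbeta β f g)
    (a : ℕ → ℂ) (ha : ∀ n, a n = iteratedDeriv n f 0 / (n.factorial : ℂ))
    (hβ0 : 0 < β) (hβ1 : β ≤ 1) :
    ‖a 2‖ ≤ 2*β/Real.sqrt (1+β) ∧
    (β ≤ 1/3 → ‖a 3‖ ≤ β) ∧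
    (1/3 ≤ β → ‖a 3‖ ≤ 4*β^2/(1+β)) :=
  stmt_18_general β f g h a ha hβ0
end
end
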